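/- arXiv:math/0312145 — 8 statements merged into one kernel-verified Lean document; each statement's English description precedes it below -/
import Mathlib

section
/- Let K be a field, V a finite-dimensional K-vector space, k a natural number, and N a nilpotent endomorphism of V with N^{k+1} = 0. Then there exists a weight filtration for N centered at 0, i.e. an increasing family of subspaces W_l ⊆ V (l ∈ ℤ) with W_l = 0 for l < -k, W_l = V for l ≥ k, N(W_l) ⊆ W_{l-2} for all l, and such that for each l ≥ 0 the map induced by N^l from W_l/W_{l-1} to W_{-l}/W_{-l-1} is a linear isomorphism. -/
/-!
Deligne's construction, by induction on `k`: one takes `W (k - 1) = ker N ^ k` and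
`W (-k) = im N ^ k`, and in between the preimage of a weight filtration, for `k - 1`, of the
map induced by `N` on `ker N ^ k ⧸ im N ^ k`. So that the induction never leaves `V`, it is run
for subquotients `S ⧸ T` of `V`, whose submodules are described by the submodules of `V` lying
between `T` and `S`.
-/

/-- `W` is a weight filtration for the nilpotent endomorphism `N` centered at `0`:
an increasing family of subspaces `W l ⊆ V` (`l ∈ ℤ`) with `W l = 0` for `l < -k`,
`W l = V` for `l ≥ k`, `N (W l) ⊆ W (l - 2)` for all `l`, and such that for each
`l ≥ 0` the map induced by `N ^ l` from `W l / W (l - 1)` to `W (-l) / W (-l - 1)`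
is a linear isomorphism (expressed elementwise: `N ^ l` maps `W l` into `W (-l)`,
the induced map is injective and surjective on the quotients). -/
def IsWeightFiltration (K : Type*) [Field K] (V : Type*) [AddCommGroup V] [Module K V]
    (k : ℕ) (N : Module.End K V) (W : ℤ → Submodule K V) : Prop :=
  Monotone W ∧
  (∀ l : ℤ, l < -(k : ℤ) → W l = ⊥) ∧
  (∀ l : ℤ, (k : ℤ) ≤ l → W l = ⊤) ∧
  (∀ l : ℤ, ∀ x ∈ W l, N x ∈ W (l - 2)) ∧
  (∀ l : ℕ,
    (∀ x ∈ W (l : ℤ), (N ^ l) x ∈ W (-(l : ℤ))) ∧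
    (∀ x ∈ W (l : ℤ), (N ^ l) x ∈ W (-(l : ℤ) - 1) → x ∈ W ((l : ℤ) - 1)) ∧
    (∀ y ∈ W (-(l : ℤ)), ∃ x ∈ W (l : ℤ), (N ^ l) x - y ∈ W (-(l : ℤ) - 1)))

section WeightFiltrationBetween

variable {R V : Type*} [Ring R] [AddCommGroup V] [Module R V]

/-- A weight filtration for the map induced by `N` on `S ⧸ T`, lifted to `V`. -/
structure IsWeightFiltrationBetween (N : Module.End R V) (k : ℕ) (T S : Submodule R V)
    (W : ℤ → Submodule R V) : Prop where
  monotone : Monotone W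
  apply_of_lt : ∀ l : ℤ, l < -(k : ℤ) → W l = T
  apply_of_le : ∀ l : ℤ, (k : ℤ) ≤ l → W l = S
  map_mem : ∀ l : ℤ, ∀ x ∈ W l, N x ∈ W (l - 2)
  pow_injective : ∀ l : ℕ, ∀ x ∈ W l, (N ^ l) x ∈ W (-(l : ℤ) - 1) → x ∈ W ((l : ℤ) - 1)
  pow_surjective :
    ∀ l : ℕ, ∀ y ∈ W (-(l : ℤ)), ∃ x ∈ W l, (N ^ l) x - y ∈ W (-(l : ℤ) - 1)

namespace IsWeightFiltrationBetween

variable {N : Module.End R V} {k : ℕ} {T S : Submodule R V} {W : ℤ → Submodule R V}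

theorem le_apply (hW : IsWeightFiltrationBetween N k T S W) (l : ℤ) : T ≤ W l :=
  hW.apply_of_lt (min l (-k - 1)) (by omega) ▸ hW.monotone (min_le_left _ _)

theorem apply_le (hW : IsWeightFiltrationBetween N k T S W) (l : ℤ) : W l ≤ S :=
  hW.apply_of_le (max l k) (le_max_right _ _) ▸ hW.monotone (le_max_left _ _)

theorem pow_apply_mem (hW : IsWeightFiltrationBetween N k T S W) (j : ℕ) {l : ℤ} {x : V}
    (hx : x ∈ W l) : (N ^ j) x ∈ W (l - 2 * j) := by
  induction j with
  | zero => simpa using hx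
  | succ j ih =>
    rw [pow_succ', Module.End.mul_apply]
    convert hW.map_mem _ _ ih using 2
    push_cast
    ring

end IsWeightFiltrationBetween

def extendFiltration (k : ℕ) (T S : Submodule R V) (W : ℤ → Submodule R V) (l : ℤ) :
    Submodule R V :=
  if (k : ℤ) ≤ l then S else if l < -(k : ℤ) then T else W l

section extendFiltration

variable {k : ℕ} {T S : Submodule R V} {W : ℤ → Submodule R V} {l : ℤ}

theorem extendFiltration_of_le (h : (k : ℤ) ≤ l) : extendFiltration k T S W l = S :=
  if_pos h

theorem extendFiltration_of_lt (h : l < -(k : ℤ)) : extendFiltration k T S W l = T := by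
  rw [extendFiltration, if_neg (by omega), if_pos h]

theorem extendFiltration_of_mem (h₁ : -(k : ℤ) ≤ l) (h₂ : l < k) :
    extendFiltration k T S W l = W l := by
  rw [extendFiltration, if_neg (by omega), if_neg (by omega)]

theorem monotone_extendFiltration (hW : Monotone W) (hT : ∀ l, T ≤ W l) (hS : ∀ l, W l ≤ S) :
    Monotone (extendFiltration k T S W) := by
  intro a b hab
  simp only [extendFiltration]
  split_ifs <;> first
    | exact le_rfl | exact hW hab | exact hT _ | exact hS _ | exact (hT a).trans (hS a)
    | omega

end extendFiltration

structure IsNilpotentSubquotient (N : Module.End R V) (k : ℕ) (T S : Submodule R V) : Prop where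
  le : T ≤ S
  mapsTo_bot : ∀ x ∈ T, N x ∈ T
  mapsTo_top : ∀ x ∈ S, N x ∈ S
  pow_mem : ∀ x ∈ S, (N ^ (k + 1)) x ∈ T

namespace IsNilpotentSubquotient

variable {N : Module.End R V} {n : ℕ} {T S : Submodule R V}

theorem pow_apply_mem_bot (h : IsNilpotentSubquotient N n T S) (j : ℕ) {x : V} (hx : x ∈ T) :
    (N ^ j) x ∈ T :=
  Module.End.pow_apply_mem_of_forall_mem j h.mapsTo_bot x hx

theorem pow_apply_mem_top (h : IsNilpotentSubquotient N n T S) (j : ℕ) {x : V} (hx : x ∈ S) :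
    (N ^ j) x ∈ S :=
  Module.End.pow_apply_mem_of_forall_mem j h.mapsTo_top x hx

/-- For `T = 0` and `S = V`, this is the passage from `V` to `ker N ^ k ⧸ im N ^ k`. -/
theorem sup_map_inf_comap (h : IsNilpotentSubquotient N (n + 1) T S) :
    IsNilpotentSubquotient N n (T ⊔ S.map (N ^ (n + 1))) (S ⊓ T.comap (N ^ (n + 1))) where
  le := by
    refine sup_le (le_inf h.le fun x hx ↦ h.pow_apply_mem_bot _ hx) ?_
    rintro _ ⟨x, hx, rfl⟩
    refine ⟨h.pow_apply_mem_top _ hx, ?_⟩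
    have : (N ^ (n + 1)) ((N ^ (n + 1)) x) = (N ^ n) ((N ^ (n + 2)) x) := by
      simp only [← Module.End.mul_apply, ← pow_add]
      ring_nf
    exact Submodule.mem_comap.2 (this ▸ h.pow_apply_mem_bot n (h.pow_mem x hx))
  mapsTo_bot := by
    intro x hx
    obtain ⟨t, ht, _, ⟨s, hs, rfl⟩, rfl⟩ := Submodule.mem_sup.1 hx
    rw [map_add, ← Module.End.mul_apply, ← pow_succ', pow_succ N (n + 1), Module.End.mul_apply]
    exact Submodule.add_mem_sup (h.mapsTo_bot t ht) (Submodule.mem_map_of_mem (h.mapsTo_top s hs))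
  mapsTo_top := by
    rintro x ⟨hxS, hxT⟩
    refine ⟨h.mapsTo_top x hxS, ?_⟩
    change (N ^ (n + 1)) (N x) ∈ T
    rw [← Module.End.mul_apply, ← pow_succ, pow_succ', Module.End.mul_apply]
    exact h.mapsTo_bot _ hxT
  pow_mem _ hx := Submodule.mem_sup_left hx.2

end IsNilpotentSubquotient

namespace IsWeightFiltrationBetween

variable {N : Module.End R V} {n : ℕ} {T S : Submodule R V} {W : ℤ → Submodule R V}

/-- `N ^ n` sends `N x` into `W (-n - 1)`, so injectivity of `N ^ n` on the graded piece applies. -/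
theorem map_mem_pred (hW : IsWeightFiltrationBetween N n (T ⊔ S.map (N ^ (n + 1)))
      (S ⊓ T.comap (N ^ (n + 1))) W)
    (h : IsNilpotentSubquotient N (n + 1) T S) {x : V} (hx : x ∈ S) : N x ∈ W (n - 1) := by
  have hNx : N x ∈ W n := by
    rw [hW.apply_of_le n le_rfl]
    refine ⟨h.mapsTo_top x hx, ?_⟩
    change (N ^ (n + 1)) (N x) ∈ T
    rw [← Module.End.mul_apply, ← pow_succ]
    exact h.pow_mem x hx
  refine hW.pow_injective n _ hNx ?_
  rw [hW.apply_of_lt _ (by omega), ← Module.End.mul_apply, ← pow_succ]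
  exact Submodule.mem_sup_right (Submodule.mem_map_of_mem hx)

/-- By surjectivity of `N ^ n`, `W (-n)` is spanned by `N ^ n W n`, `T` and `im N ^ (n + 1)`,
all of which `N` maps into `T`. -/
theorem map_mem_bot (hW : IsWeightFiltrationBetween N n (T ⊔ S.map (N ^ (n + 1)))
      (S ⊓ T.comap (N ^ (n + 1))) W)
    (h : IsNilpotentSubquotient N (n + 1) T S) {y : V} (hy : y ∈ W (-n)) : N y ∈ T := by
  obtain ⟨x, hx, hxy⟩ := hW.pow_surjective n y hy
  rw [hW.apply_of_le n le_rfl] at hx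
  rw [hW.apply_of_lt _ (by omega)] at hxy
  obtain ⟨t, ht, _, ⟨s, hs, rfl⟩, hts⟩ := Submodule.mem_sup.1 hxy
  have hy : y = (N ^ n) x - t - (N ^ (n + 1)) s := by rw [sub_sub, hts, sub_sub_cancel]
  rw [hy, map_sub, map_sub, ← Module.End.mul_apply, ← pow_succ', ← Module.End.mul_apply,
    ← pow_succ']
  exact sub_mem (sub_mem hx.2 (h.mapsTo_bot t ht)) (h.pow_mem s hs)

theorem map_mem_extendFiltration (hW : IsWeightFiltrationBetween N n (T ⊔ S.map (N ^ (n + 1)))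
      (S ⊓ T.comap (N ^ (n + 1))) W)
    (h : IsNilpotentSubquotient N (n + 1) T S) (l : ℤ) (x : V)
    (hx : x ∈ extendFiltration (n + 1) T S W l) :
    N x ∈ extendFiltration (n + 1) T S W (l - 2) := by
  rcases lt_or_ge l (-n - 1) with h₁ | h₁
  · rw [extendFiltration_of_lt (by omega)] at hx ⊢
    exact h.mapsTo_bot x hx
  rcases lt_or_ge l (-n + 1) with h₂ | h₂
  · rw [extendFiltration_of_mem (by omega) (by omega)] at hx
    rw [extendFiltration_of_lt (by omega)]
    exact hW.map_mem_bot h (hW.monotone (by omega) hx)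
  rcases lt_or_ge l (n + 1) with h₃ | h₃
  · rw [extendFiltration_of_mem (by omega) (by omega)] at hx ⊢
    exact hW.map_mem l x hx
  rw [extendFiltration_of_le (by omega)] at hx
  rcases lt_or_ge l (n + 3) with h₄ | h₄
  · rw [extendFiltration_of_mem (by omega) (by omega)]
    exact hW.monotone (by omega) (hW.map_mem_pred h hx)
  · rw [extendFiltration_of_le (by omega)]
    exact h.mapsTo_top x hx

theorem extendFiltration_succ (hW : IsWeightFiltrationBetween N n (T ⊔ S.map (N ^ (n + 1)))
      (S ⊓ T.comap (N ^ (n + 1))) W)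
    (h : IsNilpotentSubquotient N (n + 1) T S) :
    IsWeightFiltrationBetween N (n + 1) T S (extendFiltration (n + 1) T S W) where
  monotone := monotone_extendFiltration hW.monotone (fun l ↦ le_sup_left.trans (hW.le_apply l))
    (fun l ↦ (hW.apply_le l).trans inf_le_left)
  apply_of_lt _ := extendFiltration_of_lt
  apply_of_le _ := extendFiltration_of_le
  map_mem := hW.map_mem_extendFiltration h
  pow_injective l x hx hNx := by
    rcases lt_trichotomy l (n + 1) with hl | rfl | hl
    · rw [extendFiltration_of_mem (by omega) (by omega)] at hx hNx ⊢
      exact hW.pow_injective l x hx hNx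
    · rw [extendFiltration_of_le le_rfl] at hx
      rw [extendFiltration_of_lt (by omega)] at hNx
      rw [extendFiltration_of_mem (by omega) (by omega), hW.apply_of_le _ (by omega)]
      exact ⟨hx, hNx⟩
    · rw [extendFiltration_of_le (by omega)] at hx ⊢
      exact hx
  pow_surjective l y hy := by
    rcases lt_trichotomy l (n + 1) with hl | rfl | hl
    · rw [extendFiltration_of_mem (by omega) (by omega)] at hy
      obtain ⟨x, hx, hxy⟩ := hW.pow_surjective l y hy
      refine ⟨x, ?_, ?_⟩ <;> rwa [extendFiltration_of_mem (by omega) (by omega)]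
    · rw [extendFiltration_of_mem (by omega) (by omega), hW.apply_of_lt _ (by omega)] at hy
      obtain ⟨t, ht, _, ⟨s, hs, rfl⟩, rfl⟩ := Submodule.mem_sup.1 hy
      refine ⟨s, by rwa [extendFiltration_of_le le_rfl], ?_⟩
      rw [extendFiltration_of_lt (by omega), sub_add_cancel_right]
      exact neg_mem ht
    · rw [extendFiltration_of_lt (by omega)] at hy
      refine ⟨0, by rw [extendFiltration_of_le (by omega)]; exact zero_mem S, ?_⟩
      rw [extendFiltration_of_lt (by omega), map_zero, zero_sub]
      exact neg_mem hy

end IsWeightFiltrationBetween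

/-- Deligne's weight filtration of `N` on `S ⧸ T`, lifted to `V`. -/
def weightFiltration (N : Module.End R V) :
    ℕ → Submodule R V → Submodule R V → ℤ → Submodule R V
  | 0, T, S, l => if 0 ≤ l then S else T
  | k + 1, T, S, l => extendFiltration (k + 1) T S
      (weightFiltration N k (T ⊔ S.map (N ^ (k + 1))) (S ⊓ T.comap (N ^ (k + 1)))) l

variable {N : Module.End R V} {T S : Submodule R V}

theorem isWeightFiltrationBetween_weightFiltration_zero (h : IsNilpotentSubquotient N 0 T S) :
    IsWeightFiltrationBetween N 0 T S (weightFiltration N 0 T S) := by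
  have apply_le (l : ℤ) : weightFiltration N 0 T S l ≤ S := by
    unfold weightFiltration; split_ifs <;> first | exact le_rfl | exact h.le
  have le_apply (l : ℤ) : T ≤ weightFiltration N 0 T S l := by
    unfold weightFiltration; split_ifs <;> first | exact le_rfl | exact h.le
  refine ⟨?_, fun l hl ↦ if_neg (by omega), fun l hl ↦ if_pos (by omega), ?_, ?_, ?_⟩
  · intro a b hab
    unfold weightFiltration
    split_ifs <;> first | exact le_rfl | exact h.le | omega
  · intro l x hx
    exact le_apply _ (pow_one N ▸ h.pow_mem x (apply_le l hx))
  · rintro (_ | l) x hx hNx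
    · simpa using hNx
    · rw [weightFiltration, if_pos (by omega)]
      exact apply_le _ hx
  · rintro (_ | l) y hy
    · exact ⟨y, by simpa using hy, by simp⟩
    · rw [weightFiltration, if_neg (by omega)] at hy
      refine ⟨0, zero_mem _, ?_⟩
      rw [weightFiltration, if_neg (by omega), map_zero, zero_sub]
      exact neg_mem hy

theorem isWeightFiltrationBetween_weightFiltration {k : ℕ}
    (h : IsNilpotentSubquotient N k T S) :
    IsWeightFiltrationBetween N k T S (weightFiltration N k T S) := by
  induction k generalizing T S with
  | zero => exact isWeightFiltrationBetween_weightFiltration_zero h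
  | succ n ih => exact (ih h.sup_map_inf_comap).extendFiltration_succ h

end WeightFiltrationBetween

theorem IsWeightFiltrationBetween.isWeightFiltration {K V : Type*} [Field K] [AddCommGroup V]
    [Module K V] {k : ℕ} {N : Module.End K V} {W : ℤ → Submodule K V}
    (hW : IsWeightFiltrationBetween N k ⊥ ⊤ W) : IsWeightFiltration K V k N W := by
  refine ⟨hW.monotone, hW.apply_of_lt, hW.apply_of_le, hW.map_mem,
    fun l ↦ ⟨fun x hx ↦ ?_, hW.pow_injective l, hW.pow_surjective l⟩⟩
  convert hW.pow_apply_mem l hx using 2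
  ring

theorem exists_weight_filtration_general (K : Type*) [Field K] (V : Type*) [AddCommGroup V]
    [Module K V] (k : ℕ) (N : Module.End K V)
    (hN : N ^ (k + 1) = 0) :
    ∃ W : ℤ → Submodule K V, IsWeightFiltration K V k N W :=
  have h : IsNilpotentSubquotient N k ⊥ ⊤ := ⟨bot_le, by simp, by simp, by simp [hN]⟩
  ⟨_, (isWeightFiltrationBetween_weightFiltration h).isWeightFiltration⟩

/-- Existence of the weight filtration centered at `0` for a nilpotent endomorphism `N`
with `N ^ (k + 1) = 0` on a finite-dimensional vector space. -/
theorem exists_weight_filtration (K : Type*) [Field K] (V : Type*) [AddCommGroup V]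
    [Module K V] [FiniteDimensional K V] (k : ℕ) (N : Module.End K V)
    (hN : N ^ (k + 1) = 0) :
    ∃ W : ℤ → Submodule K V, IsWeightFiltration K V k N W :=
  exists_weight_filtration_general K V k N hN
end

section
/- Let K be a field, V a finite-dimensional K-vector space, k a natural number, and N a nilpotent endomorphism of V with N^{k+1} = 0. Then the weight filtration for N centered at 0 is unique: if (W_l)_{l∈ℤ} and (W'_l)_{l∈ℤ} are both weight filtrations for N centered at 0, then W_l = W'_l for every l ∈ ℤ. -/
section aux
variable {K : Type*} [Field K] {V : Type*} [AddCommGroup V] [Module K V]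
  {k : ℕ} {N : Module.End K V} {W : ℤ → Submodule K V}

lemma wf_pow_mem (hW : IsWeightFiltration K V k N W) :
    ∀ j : ℕ, ∀ l : ℤ, ∀ x ∈ W l, (N ^ j) x ∈ W (l - 2 * j) := by
  intro j
  induction j with
  | zero => intro l x hx; simpa using hx
  | succ j ih =>
    intro l x hx
    have h2 : N ((N ^ j) x) ∈ W (l - 2 * j - 2) := hW.2.2.2.1 _ _ (ih l x hx)
    have he : (N ^ (j + 1)) x = N ((N ^ j) x) := by
      rw [pow_succ']; rfl
    rw [he, show l - 2 * ((j + 1 : ℕ) : ℤ) = l - 2 * (j : ℤ) - 2 by push_cast; ring]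
    exact h2

/-- negative levels are determined from more negative ones and positive ones -/
lemma wf_neg_eq (hW : IsWeightFiltration K V k N W) (j : ℕ) :
    W (-(j : ℤ)) = Submodule.map (N ^ j) (W (j : ℤ)) ⊔ W (-(j : ℤ) - 1) := by
  apply le_antisymm
  · intro y hy
    obtain ⟨x, hx, hsub⟩ := (hW.2.2.2.2 j).2.2 y hy
    have : y = (N ^ j) x + (-((N ^ j) x - y)) := by abel
    rw [this]
    exact Submodule.add_mem_sup (Submodule.mem_map_of_mem hx) (neg_mem hsub)
  · apply sup_le
    · rw [Submodule.map_le_iff_le_comap]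
      intro x hx
      exact (hW.2.2.2.2 j).1 x hx
    · exact hW.1 (by omega)

/-- positive levels are determined by negative ones -/
lemma wf_pos_eq (hW : IsWeightFiltration K V k N W) (hN : N ^ (k + 1) = 0) (l : ℕ) :
    W (l : ℤ) = Submodule.comap (N ^ (l + 1)) (W (-(l : ℤ) - 2)) := by
  apply le_antisymm
  · intro x hx
    have h := wf_pow_mem hW (l + 1) l x hx
    rw [show (l : ℤ) - 2 * ((l + 1 : ℕ) : ℤ) = -(l : ℤ) - 2 by push_cast; ring] at h
    exact Submodule.mem_comap.mpr h
  · intro x hx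
    simp only [Submodule.mem_comap] at hx
    -- downward induction
    have key : ∀ d : ℕ, x ∈ W ((l : ℤ) + d) → x ∈ W (l : ℤ) := by
      intro d
      induction d with
      | zero => intro h; simpa using h
      | succ d ih =>
        intro h
        apply ih
        have hinj := (hW.2.2.2.2 (l + d + 1)).2.1 x
          (by rw [show ((l + d + 1 : ℕ) : ℤ) = (l : ℤ) + ((d : ℕ) + 1 : ℤ) by push_cast; ring]
              exact_mod_cast h)
        have hNx : (N ^ (l + d + 1)) x ∈ W (-(l : ℤ) - 2 - 2 * d) := by
          have := wf_pow_mem hW d (-(l : ℤ) - 2) _ hx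
          rw [show l + d + 1 = d + (l + 1) by ring, pow_add]
          exact this
        have hNx' : (N ^ (l + d + 1)) x ∈ W (-((l + d + 1 : ℕ) : ℤ) - 1) :=
          hW.1 (by push_cast; omega) hNx
        have := hinj hNx'
        rw [show ((l + d + 1 : ℕ) : ℤ) - 1 = (l : ℤ) + d by push_cast; ring] at this
        exact this
    by_cases hlk : l < k
    · have : x ∈ W ((l : ℤ) + (k - l : ℕ)) := by
        rw [hW.2.2.1 _ (by push_cast; omega)]; trivial
      exact key _ this
    · rw [hW.2.2.1 _ (by omega)]; trivial

end aux

/-- Uniqueness of the weight filtration centered at `0` for a nilpotent endomorphism `N`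
with `N ^ (k + 1) = 0` on a finite-dimensional vector space. -/
theorem weight_filtration_unique (K : Type*) [Field K] (V : Type*) [AddCommGroup V]
    [Module K V] [FiniteDimensional K V] (k : ℕ) (N : Module.End K V)
    (hN : N ^ (k + 1) = 0) (W W' : ℤ → Submodule K V)
    (hW : IsWeightFiltration K V k N W) (hW' : IsWeightFiltration K V k N W') :
    ∀ l : ℤ, W l = W' l := by
  have key : ∀ d : ℕ, (∀ l : ℤ, (k : ℤ) - d ≤ l → W l = W' l) ∧
      (∀ l : ℤ, l ≤ (d : ℤ) - k - 1 → W l = W' l) := by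
    intro d
    induction d with
    | zero =>
      constructor
      · intro l hl
        rw [hW.2.2.1 l (by omega), hW'.2.2.1 l (by omega)]
      · intro l hl
        rw [hW.2.1 l (by omega), hW'.2.1 l (by omega)]
    | succ d ih =>
      by_cases hdk : d < k
      · -- new positive level m = k - d - 1, new negative level d - k = -(k - d)
        have hpos : ∀ l : ℤ, (k : ℤ) - (d + 1) ≤ l → W l = W' l := by
          intro l hl
          rcases lt_or_ge l ((k : ℤ) - d) with h | h
          · have hlm : l = (k : ℤ) - d - 1 := by push_cast at hl ⊢; omega
            have hm : l = ((k - d - 1 : ℕ) : ℤ) := by push_cast; omega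
            rw [hm, wf_pos_eq hW hN, wf_pos_eq hW' hN,
              ih.2 _ (by push_cast; omega)]
          · exact ih.1 l h
        constructor
        · exact hpos
        · intro l hl
          rcases lt_or_ge ((d : ℤ) - k - 1) l with h | h
          · have hlm : l = (d : ℤ) - k := by push_cast at hl ⊢; omega
            have hm : l = -((k - d : ℕ) : ℤ) := by push_cast; omega
            rw [hm, wf_neg_eq hW, wf_neg_eq hW',
              hpos _ (by push_cast; omega), ih.2 _ (by push_cast; omega)]
          · exact ih.2 l h
      · -- d ≥ k : ranges already covered
        constructor
        · intro l hl
          rcases le_or_gt ((k : ℤ) - d) l with h | h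
          · exact ih.1 l h
          · exact ih.2 l (by omega)
        · intro l hl
          rcases le_or_gt l ((d : ℤ) - k - 1) with h | h
          · exact ih.2 l h
          · exact ih.1 l (by omega)
  intro l
  exact (key (k + l.natAbs)).1 l (by omega)
end

section
/- Suppose v_1, …, v_q : X → E is a measurable frame such that sup_{x∈X, 1≤i≤q} ‖v_i(x)‖ < ∞ and there is a constant C > 0 such that for μ-almost every x the Gram matrix G(x) is invertible and the operator norm of G(x)^{-1} on ℂ^q is at most C. Then the frame is L²-adapted: for all measurable functions f_1, …, f_q : X → ℂ, if ∫_X ‖Σ_{i=1}^q f_i(x) v_i(x)‖² dμ(x) < ∞, then ∫_X |f_i(x)|² ‖v_i(x)‖² dμ(x) < ∞ for every i = 1, …, q. -/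
open MeasureTheory Matrix
open scoped ENNReal NNReal InnerProductSpace

/-! The coefficients of `s = ∑ j, c j • v j` are recovered from the inner products `⟪v i, s⟫` by
the inverse Gram matrix, `c = G⁻¹ (⟪v i, s⟫)ᵢ`. Hence `‖c i • v i‖ ≤ C √q M² ‖s‖` pointwise
almost everywhere, and square integrability passes from `s` to each summand. -/

theorem EuclideanSpace.norm_le_sqrt_card_mul {𝕜 ι : Type*} [RCLike 𝕜] [Fintype ι]
    (x : EuclideanSpace 𝕜 ι) {B : ℝ} (hB : ∀ i, ‖x i‖ ≤ B) :
    ‖x‖ ≤ √(Fintype.card ι) * B := by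
  rcases isEmpty_or_nonempty ι with hι | ⟨⟨i₀⟩⟩
  · simp [Subsingleton.elim x 0]
  have hB₀ : 0 ≤ B := (norm_nonneg _).trans (hB i₀)
  calc ‖x‖ = √(∑ i, ‖x i‖ ^ 2) := EuclideanSpace.norm_eq x
    _ ≤ √(∑ _i : ι, B ^ 2) :=
        Real.sqrt_le_sqrt <| Finset.sum_le_sum fun i _ => pow_le_pow_left₀ (norm_nonneg _) (hB i) 2
    _ = √(Fintype.card ι) * B := by
        rw [Finset.sum_const, Finset.card_univ, nsmul_eq_mul, Real.sqrt_mul (Nat.cast_nonneg _),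
          Real.sqrt_sq hB₀]

theorem Matrix.norm_le_opNorm_inv_mul_norm {𝕜 ι : Type*} [RCLike 𝕜] [Fintype ι] [DecidableEq ι]
    {A : Matrix ι ι 𝕜} (hA : IsUnit A) (x : EuclideanSpace 𝕜 ι) :
    ‖x‖ ≤ ‖toEuclideanCLM (𝕜 := 𝕜) A⁻¹‖ * ‖toEuclideanCLM (𝕜 := 𝕜) A x‖ := by
  have hx : toEuclideanCLM (𝕜 := 𝕜) A⁻¹ (toEuclideanCLM (𝕜 := 𝕜) A x) = x := by
    rw [← mul_apply_eq_comp, ← map_mul,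
      nonsing_inv_mul _ ((isUnit_iff_isUnit_det A).mp hA), map_one, one_apply_eq_self]
  calc ‖x‖ = ‖toEuclideanCLM (𝕜 := 𝕜) A⁻¹ (toEuclideanCLM (𝕜 := 𝕜) A x)‖ := by rw [hx]
    _ ≤ _ := ContinuousLinearMap.le_opNorm _ _

section Gram

variable {𝕜 E ι : Type*} [RCLike 𝕜] [NormedAddCommGroup E] [InnerProductSpace 𝕜 E] [Fintype ι]

theorem Matrix.gram_mulVec (v : ι → E) (c : ι → 𝕜) :
    gram 𝕜 v *ᵥ c = fun i => ⟪v i, ∑ j, c j • v j⟫_𝕜 := by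
  ext i
  simp [mulVec, dotProduct, inner_sum, inner_smul_right, mul_comm]

theorem norm_coeff_le_of_norm_gram_inv_le [DecidableEq ι] {v : ι → E} (hG : IsUnit (gram 𝕜 v))
    {C : ℝ} (hC : ‖toEuclideanCLM (𝕜 := 𝕜) (gram 𝕜 v)⁻¹‖ ≤ C)
    {M : ℝ} (hM : ∀ i, ‖v i‖ ≤ M) (c : ι → 𝕜) (i : ι) :
    ‖c i‖ ≤ C * (√(Fintype.card ι) * (M * ‖∑ j, c j • v j‖)) := by
  have hGc : ‖toEuclideanCLM (𝕜 := 𝕜) (gram 𝕜 v) (WithLp.toLp 2 c)‖ ≤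
      √(Fintype.card ι) * (M * ‖∑ j, c j • v j‖) := by
    rw [toEuclideanCLM_toLp, gram_mulVec]
    refine EuclideanSpace.norm_le_sqrt_card_mul _ fun j => ?_
    exact (norm_inner_le_norm _ _).trans (mul_le_mul_of_nonneg_right (hM j) (norm_nonneg _))
  calc ‖c i‖ ≤ ‖WithLp.toLp 2 c‖ := PiLp.norm_apply_le (WithLp.toLp 2 c) i
    _ ≤ _ := norm_le_opNorm_inv_mul_norm hG _
    _ ≤ _ := mul_le_mul hC hGc (norm_nonneg _) ((norm_nonneg _).trans hC)

theorem norm_smul_le_of_norm_gram_inv_le [DecidableEq ι] {v : ι → E} (hG : IsUnit (gram 𝕜 v))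
    {C : ℝ} (hC : ‖toEuclideanCLM (𝕜 := 𝕜) (gram 𝕜 v)⁻¹‖ ≤ C)
    {M : ℝ} (hM : ∀ i, ‖v i‖ ≤ M) (c : ι → 𝕜) (i : ι) :
    ‖c i • v i‖ ≤ C * √(Fintype.card ι) * M ^ 2 * ‖∑ j, c j • v j‖ := by
  have hc := norm_coeff_le_of_norm_gram_inv_le hG hC hM c i
  calc ‖c i • v i‖ = ‖c i‖ * ‖v i‖ := norm_smul _ _
    _ ≤ C * (√(Fintype.card ι) * (M * ‖∑ j, c j • v j‖)) * M :=
        mul_le_mul hc (hM i) (norm_nonneg _) ((norm_nonneg _).trans hc)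
    _ = C * √(Fintype.card ι) * M ^ 2 * ‖∑ j, c j • v j‖ := by ring

end Gram

theorem lintegral_nnnorm_pow_lt_top_of_le_mul {X F G : Type*} [MeasurableSpace X] {μ : Measure X}
    [SeminormedAddCommGroup F] [SeminormedAddCommGroup G] {g : X → F} {h : X → G} {K : ℝ}
    (hgh : ∀ᵐ x ∂μ, ‖g x‖ ≤ K * ‖h x‖) (n : ℕ)
    (hh : ∫⁻ x, (‖h x‖₊ : ℝ≥0∞) ^ n ∂μ < ⊤) :
    ∫⁻ x, (‖g x‖₊ : ℝ≥0∞) ^ n ∂μ < ⊤ := by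
  have hpt : ∀ᵐ x ∂μ, (‖g x‖₊ : ℝ≥0∞) ^ n ≤ (K.toNNReal : ℝ≥0∞) ^ n * (‖h x‖₊ : ℝ≥0∞) ^ n := by
    filter_upwards [hgh] with x hx
    rw [← mul_pow]
    gcongr
    rw [← ENNReal.coe_mul, ENNReal.coe_le_coe, ← NNReal.coe_le_coe, NNReal.coe_mul, coe_nnnorm,
      coe_nnnorm]
    exact hx.trans (mul_le_mul_of_nonneg_right (Real.le_coe_toNNReal K) (norm_nonneg _))
  calc ∫⁻ x, (‖g x‖₊ : ℝ≥0∞) ^ n ∂μ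
      ≤ ∫⁻ x, (K.toNNReal : ℝ≥0∞) ^ n * (‖h x‖₊ : ℝ≥0∞) ^ n ∂μ := lintegral_mono_ae hpt
    _ = (K.toNNReal : ℝ≥0∞) ^ n * ∫⁻ x, (‖h x‖₊ : ℝ≥0∞) ^ n ∂μ :=
        lintegral_const_mul' _ _ (by simp)
    _ < ⊤ := ENNReal.mul_lt_top (by simp) hh

theorem l2Adapted_of_bounded_gram_inverse_general
    {X : Type*} [MeasurableSpace X] (μ : Measure X)
    {E : Type*} [NormedAddCommGroup E] [InnerProductSpace ℂ E]
    {q : ℕ} (v : Fin q → X → E)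
    (M : ℝ) (hM : ∀ (x : X) (i : Fin q), ‖v i x‖ ≤ M)
    (C : ℝ)
    (hgram : ∀ᵐ x ∂μ,
      IsUnit (Matrix.of fun i j : Fin q => (inner ℂ (v i x) (v j x) : ℂ)) ∧
      ‖Matrix.toEuclideanCLM (𝕜 := ℂ)
          (Matrix.of fun i j : Fin q => (inner ℂ (v i x) (v j x) : ℂ))⁻¹‖ ≤ C)
    (f : Fin q → X → ℂ)
    (hL2 : ∫⁻ x, (‖∑ i, f i x • v i x‖₊ : ℝ≥0∞) ^ 2 ∂μ < ⊤) :
    ∀ i, ∫⁻ x, (‖f i x • v i x‖₊ : ℝ≥0∞) ^ 2 ∂μ < ⊤ := by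
  intro i
  refine lintegral_nnnorm_pow_lt_top_of_le_mul (K := C * √q * M ^ 2) ?_ 2 hL2
  filter_upwards [hgram] with x ⟨hG, hGinv⟩
  simpa using norm_smul_le_of_norm_gram_inv_le (v := fun j => v j x) hG hGinv (hM x)
    (fun j => f j x) i

/-- A measurable frame `v₁, …, v_q : X → E` with uniformly bounded norms and with
Gram matrices having (a.e.) uniformly bounded inverses (in operator norm on `ℂ^q`)
is `L²`-adapted: if a combination `∑ i, f i • v i` is square integrable, then each
summand `f i • v i` is square integrable. -/
theorem l2Adapted_of_bounded_gram_inverse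
    {X : Type*} [MeasurableSpace X] (μ : Measure X)
    {E : Type*} [NormedAddCommGroup E] [InnerProductSpace ℂ E] [FiniteDimensional ℂ E]
    [MeasurableSpace E] [BorelSpace E]
    {q : ℕ} (v : Fin q → X → E)
    (hvmeas : ∀ i, Measurable (v i))
    (hframe : ∀ x, LinearIndependent ℂ fun i => v i x)
    (M : ℝ) (hM : ∀ (x : X) (i : Fin q), ‖v i x‖ ≤ M)
    (C : ℝ) (hC : 0 < C)
    (hgram : ∀ᵐ x ∂μ,
      IsUnit (Matrix.of fun i j : Fin q => (inner ℂ (v i x) (v j x) : ℂ)) ∧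
      ‖Matrix.toEuclideanCLM (𝕜 := ℂ)
          (Matrix.of fun i j : Fin q => (inner ℂ (v i x) (v j x) : ℂ))⁻¹‖ ≤ C)
    (f : Fin q → X → ℂ) (hfmeas : ∀ i, Measurable (f i))
    (hL2 : ∫⁻ x, (‖∑ i, f i x • v i x‖₊ : ℝ≥0∞) ^ 2 ∂μ < ⊤) :
    ∀ i, ∫⁻ x, (‖f i x • v i x‖₊ : ℝ≥0∞) ^ 2 ∂μ < ⊤ :=
  l2Adapted_of_bounded_gram_inverse_general μ v M hM C hgram f hL2
end

section
/- Let H be a finite-dimensional complex vector space with a real structure c and a Hodge structure of weight k, and let Z₁, Z₂ be commuting endomorphisms of H preserving each H^{p,q} and simultaneously diagonalizable with integer eigenvalues, with simultaneous eigenspace decomposition H^{p,q} = ⊕_{(l₁,l₂)∈ℤ²} H^{p,q}_{l₁,l₂}. For θ ∈ ℝ let R_θ be the invertible endomorphism of H acting on H^{p,q}_{l₁,l₂} as multiplication by exp(i(l₁ + l₂ + p - q)θ). If a subspace H¹ ⊆ H is stable under Z₁ and Z₂, satisfies c(H¹) = H¹, and satisfies R_θ(H¹) = H¹ for all θ ∈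 ℝ, then H¹ is graded by the Hodge decomposition, i.e. H¹ = ⊕_p (H¹ ∩ H^{p,k-p}); in particular the subspaces H¹ ∩ H^{p,q} define a Hodge structure of weight k on (H¹, c|_{H¹}). -/
open Finset Polynomial

/-- Lagrange-interpolation separation lemma: if all "power sums" `∑ (c i)^n • v i`
lie in a submodule, then so does each fiber sum over a level set of `c`. -/
lemma filter_sum_mem_of_pow_smul_sum_mem {H : Type*} [AddCommGroup H] [Module ℂ H]
    (H₁ : Submodule ℂ H) {ι : Type*} [DecidableEq ι] (s : Finset ι) (v : ι → H) (c : ι → ℂ)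
    (hmem : ∀ n : ℕ, (∑ i ∈ s, (c i) ^ n • v i) ∈ H₁) (a : ℂ) :
    (∑ i ∈ s.filter (fun i => c i = a), v i) ∈ H₁ := by
  classical
  by_cases ha : a ∈ s.image c
  · set P : ℂ[X] := Lagrange.interpolate (s.image c) id (fun b => if b = a then 1 else 0) with hP
    have key : (∑ i ∈ s, (P.eval (c i)) • v i) ∈ H₁ := by
      have heq : (∑ i ∈ s, (P.eval (c i)) • v i)
          = ∑ n ∈ Finset.range (P.natDegree + 1), P.coeff n • (∑ i ∈ s, (c i) ^ n • v i) := by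
        simp only [Finset.smul_sum]
        rw [Finset.sum_comm]
        refine Finset.sum_congr rfl fun i _ => ?_
        rw [Polynomial.eval_eq_sum_range, Finset.sum_smul]
        refine Finset.sum_congr rfl fun n _ => ?_
        rw [smul_smul]
      rw [heq]
      exact Submodule.sum_mem _ fun n _ => Submodule.smul_mem _ _ (hmem n)
    have heq2 : (∑ i ∈ s, (P.eval (c i)) • v i)
        = ∑ i ∈ s.filter (fun i => c i = a), v i := by
      rw [← Finset.sum_fiberwise_of_maps_to (g := c) (t := s.image c)
        (fun i hi => Finset.mem_image_of_mem c hi) (fun i => (P.eval (c i)) • v i)]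
      have hinner : ∀ b ∈ s.image c,
          (∑ i ∈ s.filter (fun i => c i = b), (P.eval (c i)) • v i)
            = if b = a then (∑ i ∈ s.filter (fun i => c i = b), v i) else 0 := by
        intro b hb
        have hev : P.eval b = if b = a then 1 else 0 := by
          have := Lagrange.eval_interpolate_at_node (r := fun b => if b = a then (1:ℂ) else 0)
            (Set.injOn_id _) hb
          simpa [hP] using this
        have : (∑ i ∈ s.filter (fun i => c i = b), (P.eval (c i)) • v i)
            = (P.eval b) • ∑ i ∈ s.filter (fun i => c i = b), v i := by
          rw [Finset.smul_sum]
          refine Finset.sum_congr rfl fun i hi => ?_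
          rw [(Finset.mem_filter.mp hi).2]
        rw [this, hev]
        split <;> simp
      rw [Finset.sum_congr rfl hinner]
      rw [Finset.sum_ite_eq' (s.image c) a (fun b => ∑ i ∈ s.filter (fun i => c i = b), v i)]
      simp [ha]
    rwa [heq2] at key
  · have : s.filter (fun i => c i = a) = ∅ := by
      refine Finset.filter_false_of_mem fun i hi hia => ha ?_
      exact hia ▸ Finset.mem_image_of_mem c hi
    rw [this, Finset.sum_empty]
    exact Submodule.zero_mem _

lemma pow_apply_of_mem_eigenspace {H : Type*} [AddCommGroup H] [Module ℂ H]
    (Z : Module.End ℂ H) {μ : ℂ} {x : H} (hx : x ∈ Module.End.eigenspace Z μ) (n : ℕ) :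
    (Z ^ n) x = μ ^ n • x := by
  induction n with
  | zero => simp
  | succ n ih =>
      rw [pow_succ, Module.End.mul_apply, Module.End.mem_eigenspace_iff.mp hx, map_smul, ih,
        smul_smul, pow_succ, mul_comm]

lemma pow_mem_of_stable {H : Type*} [AddCommGroup H] [Module ℂ H]
    (H₁ : Submodule ℂ H) (Z : Module.End ℂ H) (hst : ∀ x ∈ H₁, Z x ∈ H₁)
    (n : ℕ) {x : H} (hx : x ∈ H₁) : (Z ^ n) x ∈ H₁ := by
  induction n with
  | zero => simpa
  | succ n ih => rw [pow_succ', Module.End.mul_apply]; exact hst _ ih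

/-- Let `H` carry a real structure `c` and a Hodge structure of weight `k`, and let
`Z₁, Z₂` be commuting endomorphisms preserving each Hodge piece, simultaneously
diagonalizable with integer eigenvalues.  Let `R θ` be the endomorphism acting on the
simultaneous eigenspace of `(Z₁, Z₂)` with eigenvalues `(l₁, l₂)` inside `H^{p,q}` as
multiplication by `exp(i (l₁ + l₂ + p - q) θ)` (here `p - q = 2p - k`).  If a subspace
`H¹` is stable under `Z₁`, `Z₂`, `c` and all `R θ`, then `H¹` is graded by the Hodge
decomposition: `H¹ = ⨆ p, H¹ ⊓ H^{p,q}` (and hence carries a sub-Hodge structure). -/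
theorem subspace_graded_of_stable
    (H : Type*) [AddCommGroup H] [Module ℂ H] [FiniteDimensional ℂ H]
    (c : H →ₛₗ[starRingEnd ℂ] H) (hc : ∀ x, c (c x) = x)
    (k : ℤ) (Hpq : ℤ → Submodule ℂ H)
    (hinternal : DirectSum.IsInternal Hpq)
    (hconj : ∀ p : ℤ, ∀ x ∈ Hpq p, c x ∈ Hpq (k - p))
    (Z₁ Z₂ : Module.End ℂ H) (hZcomm : Commute Z₁ Z₂)
    (hZ₁pres : ∀ p : ℤ, ∀ x ∈ Hpq p, Z₁ x ∈ Hpq p)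
    (hZ₂pres : ∀ p : ℤ, ∀ x ∈ Hpq p, Z₂ x ∈ Hpq p)
    (hdiag : ∀ p : ℤ, Hpq p = ⨆ l : ℤ × ℤ,
      Hpq p ⊓ Module.End.eigenspace Z₁ (l.1 : ℂ) ⊓ Module.End.eigenspace Z₂ (l.2 : ℂ))
    (R : ℝ → Module.End ℂ H)
    (hR : ∀ (θ : ℝ) (p : ℤ) (l : ℤ × ℤ), ∀ x ∈
        Hpq p ⊓ Module.End.eigenspace Z₁ (l.1 : ℂ) ⊓ Module.End.eigenspace Z₂ (l.2 : ℂ),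
      R θ x = Complex.exp (Complex.I * (((l.1 : ℂ) + (l.2 : ℂ) + (2 * p - k : ℤ)) * θ)) • x)
    (H₁ : Submodule ℂ H)
    (hZ₁H₁ : ∀ x ∈ H₁, Z₁ x ∈ H₁) (hZ₂H₁ : ∀ x ∈ H₁, Z₂ x ∈ H₁)
    (hcH₁ : Submodule.map c H₁ = H₁)
    (hRH₁ : ∀ θ : ℝ, Submodule.map (R θ) H₁ = H₁) :
    H₁ = ⨆ p : ℤ, H₁ ⊓ Hpq p := by
  classical
  refine le_antisymm ?_ (iSup_le fun p => inf_le_left)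
  intro x hx
  -- decompose `x` into simultaneous eigenvectors inside Hodge pieces
  set S : ℤ × ℤ × ℤ → Submodule ℂ H := fun t =>
    Hpq t.1 ⊓ Module.End.eigenspace Z₁ (t.2.1 : ℂ) ⊓ Module.End.eigenspace Z₂ (t.2.2 : ℂ)
    with hS
  have htop : x ∈ ⨆ t : ℤ × ℤ × ℤ, S t := by
    have h1 : x ∈ ⨆ p, Hpq p := by
      rw [hinternal.submodule_iSup_eq_top]; trivial
    have h2 : (⨆ p, Hpq p) = ⨆ t : ℤ × ℤ × ℤ, S t := by
      rw [iSup_prod]; exact iSup_congr fun p => hdiag p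
    rwa [h2] at h1
  obtain ⟨f, hf, hsum⟩ := (Submodule.mem_iSup_iff_exists_finsupp _ _).mp htop
  have hxsum : ∑ t ∈ f.support, f t = x := hsum
  -- eigenvector facts for the components
  have hf1 : ∀ t, f t ∈ Module.End.eigenspace Z₁ ((t.2.1 : ℂ)) := fun t =>
    (Submodule.mem_inf.mp (Submodule.mem_inf.mp (hf t)).1).2
  have hf2 : ∀ t, f t ∈ Module.End.eigenspace Z₂ ((t.2.2 : ℂ)) := fun t =>
    (Submodule.mem_inf.mp (hf t)).2
  have hfp : ∀ t, f t ∈ Hpq t.1 := fun t =>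
    (Submodule.mem_inf.mp (Submodule.mem_inf.mp (hf t)).1).1
  set cA : ℤ × ℤ × ℤ → ℂ := fun t =>
    Complex.exp (Complex.I * ((t.2.1 : ℂ) + (t.2.2 : ℂ) + ((2 * t.1 - k : ℤ) : ℂ))) with hcA
  -- the key claim: every component of `x` lies in `H₁`
  have hcomp : ∀ t₀ ∈ f.support, f t₀ ∈ H₁ := by
    intro t₀ ht₀
    -- Step A: separate by the `R`-weight
    have stepA : (∑ t ∈ f.support.filter (fun t => cA t = cA t₀), f t) ∈ H₁ := by
      refine filter_sum_mem_of_pow_smul_sum_mem H₁ f.support f cA (fun n => ?_) (cA t₀)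
      have h1 : R (n : ℝ) x ∈ H₁ := by
        rw [← hRH₁ (n : ℝ)]; exact ⟨x, hx, rfl⟩
      have h2 : R (n : ℝ) x = ∑ t ∈ f.support, (cA t) ^ n • f t := by
        rw [← hxsum, map_sum]
        refine Finset.sum_congr rfl fun t ht => ?_
        rw [hR ((n : ℕ) : ℝ) t.1 t.2 (f t) (hf t)]
        congr 1
        rw [hcA, ← Complex.exp_nat_mul]
        congr 1
        push_cast
        ring
      rwa [h2] at h1
    -- Step B: separate by the `Z₁`-eigenvalue
    set TA := f.support.filter (fun t => cA t = cA t₀) with hTA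
    have stepB : (∑ t ∈ TA.filter (fun t => ((t.2.1 : ℂ)) = ((t₀.2.1 : ℂ))), f t) ∈ H₁ := by
      refine filter_sum_mem_of_pow_smul_sum_mem H₁ TA f (fun t => ((t.2.1 : ℂ)))
        (fun n => ?_) _
      have h1 : (Z₁ ^ n) (∑ t ∈ TA, f t) ∈ H₁ := pow_mem_of_stable H₁ Z₁ hZ₁H₁ n stepA
      have h2 : (Z₁ ^ n) (∑ t ∈ TA, f t) = ∑ t ∈ TA, ((t.2.1 : ℂ)) ^ n • f t := by
        rw [map_sum]
        exact Finset.sum_congr rfl fun t _ => pow_apply_of_mem_eigenspace Z₁ (hf1 t) n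
      rwa [h2] at h1
    -- Step C: separate by the `Z₂`-eigenvalue
    set TB := TA.filter (fun t => ((t.2.1 : ℂ)) = ((t₀.2.1 : ℂ))) with hTB
    have stepC : (∑ t ∈ TB.filter (fun t => ((t.2.2 : ℂ)) = ((t₀.2.2 : ℂ))), f t) ∈ H₁ := by
      refine filter_sum_mem_of_pow_smul_sum_mem H₁ TB f (fun t => ((t.2.2 : ℂ)))
        (fun n => ?_) _
      have h1 : (Z₂ ^ n) (∑ t ∈ TB, f t) ∈ H₁ := pow_mem_of_stable H₁ Z₂ hZ₂H₁ n stepB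
      have h2 : (Z₂ ^ n) (∑ t ∈ TB, f t) = ∑ t ∈ TB, ((t.2.2 : ℂ)) ^ n • f t := by
        rw [map_sum]
        exact Finset.sum_congr rfl fun t _ => pow_apply_of_mem_eigenspace Z₂ (hf2 t) n
      rwa [h2] at h1
    -- the triple filter is the singleton `{t₀}`
    have hsingle : TB.filter (fun t => ((t.2.2 : ℂ)) = ((t₀.2.2 : ℂ))) = {t₀} := by
      ext t
      simp only [hTB, hTA, Finset.mem_filter, Finset.mem_singleton]
      constructor
      · rintro ⟨⟨⟨htT, hA⟩, hB⟩, hC⟩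
        have h1 : t.2.1 = t₀.2.1 := by exact_mod_cast hB
        have h2 : t.2.2 = t₀.2.2 := by exact_mod_cast hC
        have h3 : t.1 = t₀.1 := by
          rw [hcA] at hA
          obtain ⟨m, hm⟩ := Complex.exp_eq_exp_iff_exists_int.mp hA
          have hC' : ((2 * t.1 - k : ℤ) : ℂ) - ((2 * t₀.1 - k : ℤ) : ℂ)
              = 2 * (Real.pi : ℂ) * (m : ℂ) := by
            rw [h1, h2] at hm
            linear_combination (-Complex.I) * hm
              + (((2 * t.1 - k : ℤ) : ℂ) - ((2 * t₀.1 - k : ℤ) : ℂ)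
                - 2 * (Real.pi : ℂ) * (m : ℂ)) * Complex.I_sq
          have hR' : ((2 * t.1 - k : ℤ) : ℝ) - ((2 * t₀.1 - k : ℤ) : ℝ)
              = 2 * Real.pi * (m : ℝ) := by exact_mod_cast hC'
          rcases eq_or_ne m 0 with hm0 | hm0
          · rw [hm0] at hR'
            have : ((t.1 : ℝ)) = ((t₀.1 : ℝ)) := by push_cast at hR'; linarith
            exact_mod_cast this
          · exfalso
            have hpi : Real.pi = ((2 * t.1 - k - (2 * t₀.1 - k) : ℤ) : ℝ) / (2 * (m : ℝ)) := by
              have hm' : (m : ℝ) ≠ 0 := Int.cast_ne_zero.mpr hm0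
              field_simp
              push_cast at hR' ⊢
              linarith
            have hrat : (((((2 * t.1 - k - (2 * t₀.1 - k) : ℤ) : ℚ) / (2 * (m : ℚ))) : ℚ) : ℝ)
                = Real.pi := by
              rw [hpi]; push_cast; ring
            exact Rat.not_irrational _ (hrat ▸ irrational_pi)
        exact Prod.ext h3 (Prod.ext h1 h2)
      · rintro rfl
        exact ⟨⟨⟨ht₀, rfl⟩, rfl⟩, rfl⟩
    rw [hsingle, Finset.sum_singleton] at stepC
    exact stepC
  rw [← hxsum]
  exact Submodule.sum_mem _ fun t ht =>
    Submodule.mem_iSup_of_mem t.1 (Submodule.mem_inf.mpr ⟨hcomp t ht, hfp t⟩)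
end

section
/- For every real number k and every A ∈ (0,1) there is a constant C > 0 such that for every real m ≤ -1 and every measurable function f : (0,A) → ℂ one has ∫₀^A r^{2m-1} (-log r)^{k-2} ( ∫₀^r ρ^{-m} |f(ρ)| dρ )² dr ≤ C · ∫₀^A |f(r)|² r (-log r)^k dr (an inequality in [0, ∞]). -/
/-!
Write `L r = -log r`. For `ρ < r < A` and `m ≤ -1` we have `ρ^(-2m) ≤ r^(-2m-2) ρ²`, so Cauchy–Schwarz
with the weights `ρ L(ρ)^(-k)` and `ρ L(ρ)^k` bounds the squared inner integral by
`r^(-2m-2) (∫₀^r ρ L(ρ)^(-k) dρ) ∫₀^A |f|² ρ L(ρ)^k dρ`. The middle factor is `O(r² L(r)^(-k))`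
uniformly in `r < A`: for `-k ≤ 0` because `L` decreases, and for `-k > 0` by splitting `(0, r)` at `r²`,
using `L(ρ) ≤ 2 L(r)` above `r²` and `ρ L(ρ)^(-k) = O(√ρ)` below. Hence the outer integrand is
`O(1 / (r L(r)²))` times the right-hand integral, and `1 / (r L(r)²)` is the derivative of `1 / L`,
which increases from `0` to `1 / L(A)` on `(0, A)`.
-/

open MeasureTheory Real Set
open scoped ENNReal

theorem lintegral_sq_le_mul_of_sq_le_mul {α : Type*} [MeasurableSpace α] {μ : Measure α}
    {f g h : α → ℝ≥0∞} (hf : AEMeasurable f μ) (hg : AEMeasurable g μ)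
    (hfgh : ∀ᵐ x ∂μ, h x ^ 2 ≤ f x * g x) :
    (∫⁻ x, h x ∂μ) ^ 2 ≤ (∫⁻ x, f x ∂μ) * ∫⁻ x, g x ∂μ := by
  have hsqrt (a : ℝ≥0∞) : (a ^ (2⁻¹ : ℝ)) ^ 2 = a := by
    rw [← ENNReal.rpow_natCast, ← ENNReal.rpow_mul]; norm_num
  have hle : ∀ᵐ x ∂μ, h x ≤ f x ^ (2⁻¹ : ℝ) * g x ^ (2⁻¹ : ℝ) := hfgh.mono fun x hx => by
    rw [← ENNReal.mul_rpow_of_nonneg _ _ (by norm_num)]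
    calc h x = (h x ^ 2) ^ ((2 : ℕ) : ℝ)⁻¹ := (ENNReal.pow_rpow_inv_natCast two_ne_zero _).symm
      _ ≤ (f x * g x) ^ (2⁻¹ : ℝ) := by
        norm_num only; exact ENNReal.rpow_le_rpow hx (by norm_num)
  calc (∫⁻ x, h x ∂μ) ^ 2 ≤ (∫⁻ x, f x ^ (2⁻¹ : ℝ) * g x ^ (2⁻¹ : ℝ) ∂μ) ^ 2 := by
        gcongr ?_ ^ 2; exact lintegral_mono_ae hle
    _ ≤ ((∫⁻ x, f x ∂μ) ^ (2⁻¹ : ℝ) * (∫⁻ x, g x ∂μ) ^ (2⁻¹ : ℝ)) ^ 2 := by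
        gcongr
        exact ENNReal.lintegral_mul_norm_pow_le hf hg (by norm_num) (by norm_num) (by norm_num)
    _ = (∫⁻ x, f x ∂μ) * ∫⁻ x, g x ∂μ := by rw [mul_pow, hsqrt, hsqrt]

theorem setLIntegral_ofReal_le_mul_measure {α : Type*} [MeasurableSpace α] {μ : Measure α}
    {s : Set α} {f : α → ℝ} {c : ℝ} (hs : MeasurableSet s) (hfc : ∀ x ∈ s, f x ≤ c) :
    ∫⁻ x in s, ENNReal.ofReal (f x) ∂μ ≤ ENNReal.ofReal c * μ s :=
  (setLIntegral_mono' hs fun x hx => ENNReal.ofReal_le_ofReal (hfc x hx)).trans_eq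
    (setLIntegral_const s _)

theorem mul_neg_log_rpow_le_sqrt {b x : ℝ} (hb : 0 < b) (hx0 : 0 < x) (hx1 : x ≤ 1) :
    x * (-log x) ^ b ≤ (2 * b) ^ b * √x := by
  have hlog := log_le_rpow_div (inv_nonneg.2 hx0.le) (inv_pos.2 (mul_pos two_pos hb))
  rw [log_inv, div_inv_eq_mul, mul_comm] at hlog
  have hpow : (-log x) ^ b ≤ (2 * b) ^ b * (√x)⁻¹ :=
    calc (-log x) ^ b ≤ (2 * b * x⁻¹ ^ (2 * b)⁻¹) ^ b :=
          rpow_le_rpow (neg_nonneg.2 (log_nonpos hx0.le hx1)) hlog hb.le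
      _ = (2 * b) ^ b * (√x)⁻¹ := by
          rw [mul_rpow (by positivity) (by positivity), ← rpow_mul (by positivity),
            inv_rpow hx0.le, sqrt_eq_rpow]
          field_simp
  calc x * (-log x) ^ b ≤ x * ((2 * b) ^ b * (√x)⁻¹) := by gcongr
    _ = (2 * b) ^ b * √x := by
        nth_rewrite 1 [← mul_self_sqrt hx0.le]
        field_simp

theorem hasDerivAt_inv_neg_log {x : ℝ} (hx0 : 0 < x) (hx1 : x ≠ 1) :
    HasDerivAt (fun y => (-log y)⁻¹) ((x * log x ^ 2)⁻¹) x := by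
  have hlog : -log x ≠ 0 := neg_ne_zero.2 (log_ne_zero_of_pos_of_ne_one hx0 hx1)
  refine ((hasDerivAt_log hx0.ne').neg.inv hlog).congr_deriv ?_
  simp only [Pi.neg_apply, neg_neg, neg_sq]
  field_simp

theorem setLIntegral_Ioo_inv_mul_log_sq_le {a : ℝ} (ha1 : a < 1) :
    ∫⁻ x in Ioo 0 a, ENNReal.ofReal (x * log x ^ 2)⁻¹ ≤ ENNReal.ofReal (-log a)⁻¹ := by
  have hmaps : ∀ x ∈ Ioo 0 a, 0 < -log x ∧ (-log x)⁻¹ ≤ (-log a)⁻¹ := fun x hx =>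
    ⟨neg_pos.2 (log_neg hx.1 (hx.2.trans ha1)),
      inv_anti₀ (neg_pos.2 (log_neg (hx.1.trans hx.2) ha1)) (neg_le_neg (log_le_log hx.1 hx.2.le))⟩
  have hmono : MonotoneOn (fun y => (-log y)⁻¹) (Ioo 0 a) := fun x hx y hy hxy =>
    inv_anti₀ (hmaps y hy).1 (neg_le_neg (log_le_log hx.1 hxy))
  rw [lintegral_deriv_eq_volume_image_of_monotoneOn measurableSet_Ioo
    (fun x hx => (hasDerivAt_inv_neg_log hx.1 (hx.2.trans ha1).ne).hasDerivWithinAt) hmono]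
  calc volume ((fun y => (-log y)⁻¹) '' Ioo 0 a) ≤ volume (Icc 0 (-log a)⁻¹) :=
        measure_mono (image_subset_iff.2 fun x hx => ⟨inv_nonneg.2 (hmaps x hx).1.le, (hmaps x hx).2⟩)
    _ = ENNReal.ofReal (-log a)⁻¹ := by rw [volume_Icc, sub_zero]

theorem setLIntegral_mul_neg_log_rpow_le_of_nonpos {b r : ℝ} (hb : b ≤ 0) (hr0 : 0 < r)
    (hr1 : r < 1) :
    ∫⁻ ρ in Ioo 0 r, ENNReal.ofReal (ρ * (-log ρ) ^ b) ≤ ENNReal.ofReal (r ^ 2 * (-log r) ^ b) := by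
  have hbound : ∀ ρ ∈ Ioo 0 r, ρ * (-log ρ) ^ b ≤ r * (-log r) ^ b := fun ρ hρ => by
    have hlog : -log r ≤ -log ρ := neg_le_neg (log_le_log hρ.1 hρ.2.le)
    exact mul_le_mul hρ.2.le (rpow_le_rpow_of_nonpos (neg_pos.2 (log_neg hr0 hr1)) hlog hb)
      (rpow_nonneg (hlog.trans' (neg_pos.2 (log_neg hr0 hr1)).le) b) hr0.le
  calc _ ≤ ENNReal.ofReal (r * (-log r) ^ b) * volume (Ioo 0 r) :=
        setLIntegral_ofReal_le_mul_measure measurableSet_Ioo hbound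
    _ = ENNReal.ofReal (r ^ 2 * (-log r) ^ b) := by
        rw [volume_Ioo, sub_zero, ← ENNReal.ofReal_mul' hr0.le]
        ring_nf

theorem setLIntegral_mul_neg_log_rpow_le_of_pos {a b r : ℝ} (hb : 0 < b) (hr0 : 0 < r)
    (hra : r ≤ a) (ha1 : a < 1) :
    ∫⁻ ρ in Ioo 0 r, ENNReal.ofReal (ρ * (-log ρ) ^ b) ≤
      ENNReal.ofReal (((2 * b) ^ b / (-log a) ^ b + 2 ^ b) * (r ^ 2 * (-log r) ^ b)) := by
  have hr1 : r < 1 := hra.trans_lt ha1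
  have hLa : 0 < -log a := neg_pos.2 (log_neg (hr0.trans_le hra) ha1)
  have hLr : -log a ≤ -log r := neg_le_neg (log_le_log hr0 hra)
  have hLr0 : 0 < -log r := hLa.trans_le hLr
  have hr2 : r ^ 2 < r := by nlinarith
  have hsmall : ∀ ρ ∈ Ioc 0 (r ^ 2), ρ * (-log ρ) ^ b ≤ (2 * b) ^ b * r := fun ρ hρ => by
    refine (mul_neg_log_rpow_le_sqrt hb hρ.1 (by nlinarith [hρ.2])).trans ?_
    gcongr
    exact (sqrt_le_left hr0.le).2 hρ.2
  have hlarge : ∀ ρ ∈ Ioo (r ^ 2) r, ρ * (-log ρ) ^ b ≤ r * (2 ^ b * (-log r) ^ b) := fun ρ hρ => by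
    have hρ0 : 0 < ρ := (pow_pos hr0 2).trans hρ.1
    have hlog : -log ρ ≤ 2 * -log r := by
      have := log_le_log (pow_pos hr0 2) hρ.1.le
      rw [log_pow] at this
      push_cast at this
      linarith
    have hLρ : 0 ≤ -log ρ := neg_nonneg.2 (log_nonpos hρ0.le (hρ.2.trans hr1).le)
    rw [← mul_rpow zero_le_two hLr0.le]
    exact mul_le_mul hρ.2.le (rpow_le_rpow hLρ hlog hb.le) (rpow_nonneg hLρ b) hr0.le
  have hratio : 1 ≤ (-log r) ^ b / (-log a) ^ b :=
    (one_le_div (by positivity)).2 (rpow_le_rpow hLa.le hLr hb.le)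
  calc ∫⁻ ρ in Ioo 0 r, ENNReal.ofReal (ρ * (-log ρ) ^ b)
      = ∫⁻ ρ in Ioc 0 (r ^ 2) ∪ Ioo (r ^ 2) r, ENNReal.ofReal (ρ * (-log ρ) ^ b) := by
        rw [Ioc_union_Ioo_eq_Ioo (by positivity) hr2]
    _ ≤ ENNReal.ofReal ((2 * b) ^ b * r) * volume (Ioc 0 (r ^ 2)) +
          ENNReal.ofReal (r * (2 ^ b * (-log r) ^ b)) * volume (Ioo (r ^ 2) r) :=
        (lintegral_union_le _ _ _).trans <| add_le_add
          (setLIntegral_ofReal_le_mul_measure measurableSet_Ioc hsmall)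
          (setLIntegral_ofReal_le_mul_measure measurableSet_Ioo hlarge)
    _ ≤ ENNReal.ofReal ((2 * b) ^ b * r) * ENNReal.ofReal (r ^ 2) +
          ENNReal.ofReal (r * (2 ^ b * (-log r) ^ b)) * ENNReal.ofReal r := by
        rw [volume_Ioc, volume_Ioo, sub_zero]
        gcongr
        exact sub_le_self r (sq_nonneg r)
    _ ≤ _ := by
        have hlarge_nonneg : 0 ≤ r * (2 ^ b * (-log r) ^ b) := by positivity
        rw [← ENNReal.ofReal_mul (by positivity), ← ENNReal.ofReal_mul hlarge_nonneg,
          ← ENNReal.ofReal_add (by positivity) (mul_nonneg hlarge_nonneg hr0.le)]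
        apply ENNReal.ofReal_le_ofReal
        have : (2 * b) ^ b * r * r ^ 2 ≤ (2 * b) ^ b / (-log a) ^ b * (r ^ 2 * (-log r) ^ b) := by
          calc (2 * b) ^ b * r * r ^ 2 ≤ (2 * b) ^ b * 1 * r ^ 2 := by gcongr
            _ ≤ (2 * b) ^ b * ((-log r) ^ b / (-log a) ^ b) * r ^ 2 := by gcongr
            _ = _ := by ring
        linarith

theorem exists_setLIntegral_mul_neg_log_rpow_le (b : ℝ) {a : ℝ} (ha0 : 0 < a) (ha1 : a < 1) :
    ∃ C, 0 < C ∧ ∀ r ∈ Ioo 0 a,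
      ∫⁻ ρ in Ioo 0 r, ENNReal.ofReal (ρ * (-log ρ) ^ b) ≤
        ENNReal.ofReal (C * (r ^ 2 * (-log r) ^ b)) := by
  rcases le_or_gt b 0 with hb | hb
  · exact ⟨1, one_pos, fun r hr => by
      simpa using setLIntegral_mul_neg_log_rpow_le_of_nonpos hb hr.1 (hr.2.trans ha1)⟩
  · have hLa : 0 < -log a := neg_pos.2 (log_neg ha0 ha1)
    exact ⟨(2 * b) ^ b / (-log a) ^ b + 2 ^ b, by positivity, fun r hr =>
      setLIntegral_mul_neg_log_rpow_le_of_pos hb hr.1 hr.2.le ha1⟩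

theorem sq_rpow_neg_mul_le {ρ r m k ℓ x : ℝ} (hρ : 0 < ρ) (hρr : ρ ≤ r) (hm : m ≤ -1)
    (hℓ : 0 < ℓ) :
    (ρ ^ (-m) * x) ^ 2 ≤ r ^ (-2 * m - 2) * (ρ * ℓ ^ (-k)) * (x ^ 2 * ρ * ℓ ^ k) := by
  have hρsq : (ρ ^ (-m)) ^ 2 = ρ ^ (-2 * m - 2) * ρ ^ 2 := by
    rw [← rpow_natCast, ← rpow_natCast, ← rpow_mul hρ.le, ← rpow_add hρ]
    ring_nf
  have hℓk : ℓ ^ (-k) * ℓ ^ k = 1 := by rw [← rpow_add hℓ, neg_add_cancel, rpow_zero]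
  calc (ρ ^ (-m) * x) ^ 2 = ρ ^ (-2 * m - 2) * (ρ ^ 2 * x ^ 2) := by rw [mul_pow, hρsq, mul_assoc]
    _ ≤ r ^ (-2 * m - 2) * (ρ ^ 2 * x ^ 2) := by
        gcongr
        linarith
    _ = r ^ (-2 * m - 2) * (ρ * ℓ ^ (-k)) * (x ^ 2 * ρ * ℓ ^ k) := by
        linear_combination (r ^ (-2 * m - 2) * ρ ^ 2 * x ^ 2) * hℓk.symm

theorem sq_setLIntegral_rpow_neg_mul_le {m r : ℝ} (k : ℝ) (hm : m ≤ -1) (hr1 : r < 1) {u : ℝ → ℝ}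
    (hu : Measurable u) (hu0 : ∀ ρ, 0 ≤ u ρ) :
    (∫⁻ ρ in Ioo 0 r, ENNReal.ofReal (ρ ^ (-m) * u ρ)) ^ 2 ≤
      ENNReal.ofReal (r ^ (-2 * m - 2)) * (∫⁻ ρ in Ioo 0 r, ENNReal.ofReal (ρ * (-log ρ) ^ (-k))) *
        ∫⁻ ρ in Ioo 0 r, ENNReal.ofReal (u ρ ^ 2 * ρ * (-log ρ) ^ k) := by
  rw [← lintegral_const_mul' _ _ ENNReal.ofReal_ne_top]
  refine lintegral_sq_le_mul_of_sq_le_mul (by fun_prop) (by fun_prop) ?_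
  refine (ae_restrict_iff' measurableSet_Ioo).2 (ae_of_all _ fun ρ hρ => ?_)
  have hL : 0 < -log ρ := neg_pos.2 (log_neg hρ.1 (hρ.2.trans hr1))
  have hweight : 0 ≤ r ^ (-2 * m - 2) * (ρ * (-log ρ) ^ (-k)) :=
    mul_nonneg (rpow_nonneg (hρ.1.trans hρ.2).le _) (mul_nonneg hρ.1.le (rpow_nonneg hL.le _))
  rw [← ENNReal.ofReal_pow (mul_nonneg (rpow_nonneg hρ.1.le _) (hu0 ρ)),
    ← ENNReal.ofReal_mul (rpow_nonneg (hρ.1.trans hρ.2).le _), ← ENNReal.ofReal_mul hweight]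
  exact ENNReal.ofReal_le_ofReal (sq_rpow_neg_mul_le hρ.1 hρ.2.le hm hL)

theorem outer_weight_mul_inner_bound_eq {m k r C : ℝ} (hr0 : 0 < r) (hr1 : r < 1) :
    r ^ (2 * m - 1) * (-log r) ^ (k - 2) * (r ^ (-2 * m - 2) * (C * (r ^ 2 * (-log r) ^ (-k)))) =
      C * (r * log r ^ 2)⁻¹ := by
  have hL : 0 < -log r := neg_pos.2 (log_neg hr0 hr1)
  have hr_pow : r ^ (2 * m - 1) * r ^ (-2 * m - 2) * r ^ 2 = r⁻¹ := by
    rw [← rpow_natCast, ← rpow_add hr0, ← rpow_add hr0, ← rpow_neg_one]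
    ring_nf
  have hL_pow : (-log r) ^ (k - 2) * (-log r) ^ (-k) = (log r ^ 2)⁻¹ := by
    rw [← rpow_add hL, ← neg_sq, ← rpow_natCast, ← rpow_neg hL.le]
    ring_nf
  calc _ = C * ((r ^ (2 * m - 1) * r ^ (-2 * m - 2) * r ^ 2) *
        ((-log r) ^ (k - 2) * (-log r) ^ (-k))) := by ring
    _ = C * (r * log r ^ 2)⁻¹ := by rw [hr_pow, hL_pow, mul_inv]

theorem hardy_integrand_le {m k r C : ℝ} (hm : m ≤ -1) (hr0 : 0 < r) (hr1 : r < 1) {u : ℝ → ℝ}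
    (hu : Measurable u) (hu0 : ∀ ρ, 0 ≤ u ρ)
    (hC : ∫⁻ ρ in Ioo 0 r, ENNReal.ofReal (ρ * (-log ρ) ^ (-k)) ≤
      ENNReal.ofReal (C * (r ^ 2 * (-log r) ^ (-k)))) :
    ENNReal.ofReal (r ^ (2 * m - 1) * (-log r) ^ (k - 2)) *
        (∫⁻ ρ in Ioo 0 r, ENNReal.ofReal (ρ ^ (-m) * u ρ)) ^ 2 ≤
      ENNReal.ofReal (C * (r * log r ^ 2)⁻¹) *
        ∫⁻ ρ in Ioo 0 r, ENNReal.ofReal (u ρ ^ 2 * ρ * (-log ρ) ^ k) := by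
  have hweight : 0 ≤ r ^ (2 * m - 1) * (-log r) ^ (k - 2) :=
    mul_nonneg (rpow_nonneg hr0.le _) (rpow_nonneg (neg_pos.2 (log_neg hr0 hr1)).le _)
  calc _ ≤ ENNReal.ofReal (r ^ (2 * m - 1) * (-log r) ^ (k - 2)) *
        (ENNReal.ofReal (r ^ (-2 * m - 2)) * ENNReal.ofReal (C * (r ^ 2 * (-log r) ^ (-k))) *
          ∫⁻ ρ in Ioo 0 r, ENNReal.ofReal (u ρ ^ 2 * ρ * (-log ρ) ^ k)) := by
        gcongr
        exact (sq_setLIntegral_rpow_neg_mul_le k hm hr1 hu hu0).trans (by gcongr)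
    _ = _ := by
        rw [← mul_assoc, ← mul_assoc, ← ENNReal.ofReal_mul hweight,
          ← ENNReal.ofReal_mul (mul_nonneg hweight (rpow_nonneg hr0.le _)), mul_assoc _ (r ^ _),
          outer_weight_mul_inner_bound_eq hr0 hr1]

/-- Weighted Hardy-type inequality (inner integral from `0`): for every real `k` and
`A ∈ (0,1)` there is `C > 0` such that for every real `m ≤ -1` and measurable
`f : (0,A) → ℂ`,
`∫₀^A r^(2m-1) (-log r)^(k-2) (∫₀^r ρ^(-m) |f ρ| dρ)² dr
  ≤ C ∫₀^A |f r|² r (-log r)^k dr` in `[0,∞]`. -/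
theorem hardy_weighted_inner_from_zero (k : ℝ) (A : ℝ) (hA0 : 0 < A) (hA1 : A < 1) :
    ∃ C : ℝ, 0 < C ∧ ∀ m : ℝ, m ≤ -1 → ∀ f : ℝ → ℂ, Measurable f →
      ∫⁻ r in Set.Ioo (0 : ℝ) A,
          ENNReal.ofReal (r ^ (2 * m - 1) * (-Real.log r) ^ (k - 2)) *
            (∫⁻ ρ in Set.Ioo (0 : ℝ) r,
              ENNReal.ofReal (ρ ^ (-m) * ‖f ρ‖)) ^ 2
        ≤ ENNReal.ofReal C *
          ∫⁻ r in Set.Ioo (0 : ℝ) A,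
            ENNReal.ofReal (‖f r‖ ^ 2 * r * (-Real.log r) ^ k) := by
  obtain ⟨C, hC, hkey⟩ := exists_setLIntegral_mul_neg_log_rpow_le (-k) hA0 hA1
  refine ⟨C * (-log A)⁻¹, mul_pos hC (inv_pos.2 (neg_pos.2 (log_neg hA0 hA1))),
    fun m hm f hf => ?_⟩
  set Y := ∫⁻ r in Ioo 0 A, ENNReal.ofReal (‖f r‖ ^ 2 * r * (-log r) ^ k)
  have hpoint : ∀ r ∈ Ioo 0 A,
      ENNReal.ofReal (r ^ (2 * m - 1) * (-log r) ^ (k - 2)) *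
          (∫⁻ ρ in Ioo 0 r, ENNReal.ofReal (ρ ^ (-m) * ‖f ρ‖)) ^ 2 ≤
        ENNReal.ofReal C * ENNReal.ofReal (r * log r ^ 2)⁻¹ * Y := fun r hr => by
    rw [← ENNReal.ofReal_mul hC.le]
    exact (hardy_integrand_le hm hr.1 (hr.2.trans hA1) hf.norm (fun ρ => norm_nonneg _)
      (hkey r hr)).trans (by gcongr; exact lintegral_mono_set (Ioo_subset_Ioo_right hr.2.le))
  calc _ ≤ ∫⁻ r in Ioo 0 A, ENNReal.ofReal C * ENNReal.ofReal (r * log r ^ 2)⁻¹ * Y :=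
        setLIntegral_mono' measurableSet_Ioo hpoint
    _ = ENNReal.ofReal C * (∫⁻ r in Ioo 0 A, ENNReal.ofReal (r * log r ^ 2)⁻¹) * Y := by
        rw [lintegral_mul_const _ (by fun_prop), lintegral_const_mul' _ _ ENNReal.ofReal_ne_top]
    _ ≤ ENNReal.ofReal C * ENNReal.ofReal (-log A)⁻¹ * Y := by
        gcongr; exact setLIntegral_Ioo_inv_mul_log_sq_le hA1
    _ = ENNReal.ofReal (C * (-log A)⁻¹) * Y := by rw [ENNReal.ofReal_mul hC.le]
end

section
/- For every real number k > 1 and every A ∈ (0,1) there is a constant C > 0 such that for every measurable function f : (0,A) → ℂ one has ∫₀^A r^{-1} (-log r)^{k-2} ( ∫₀^r |f(ρ)| dρ )² dr ≤ C · ∫₀^A |f(r)|² r (-log r)^k dr (an inequality in [0, ∞]). -/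
/-!
Write `L r = -log r` and `ε = (k - 1) / 2`. Cauchy–Schwarz with the weight `ρ L(ρ)^(1+ε)` gives
`(∫₀^r |f|)² ≤ ε⁻¹ L(r)^(-ε) ∫₀^r |f|² ρ L^(1+ε)`, since `∫₀^r dρ / (ρ L^(1+ε)) = L(r)^(-ε) / ε`.
After exchanging the order of integration the remaining inner integral is
`∫_ρ^A dr / (r L^(1-ε)) ≤ L(ρ)^ε / ε`, so `C = ε⁻²` works.
-/

open MeasureTheory Set Filter Topology
open scoped ENNReal

theorem lintegral_Ioo_ofReal_deriv_eq_sub {F F' : ℝ → ℝ} {a b : ℝ} (hab : a ≤ b)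
    (hcont : ContinuousOn F (Icc a b)) (hderiv : ∀ x ∈ Ioo a b, HasDerivAt F (F' x) x)
    (hpos : ∀ x ∈ Ioo a b, 0 ≤ F' x) :
    ∫⁻ x in Ioo a b, ENNReal.ofReal (F' x) = ENNReal.ofReal (F b - F a) := by
  have hint := intervalIntegral.integrableOn_deriv_of_nonneg hcont hderiv hpos
  rw [← ofReal_integral_eq_lintegral_ofReal (hint.mono_set Ioo_subset_Ioc_self)
    ((ae_restrict_iff' measurableSet_Ioo).2 (Eventually.of_forall hpos)),
    ← integral_Ioc_eq_integral_Ioo, ← intervalIntegral.integral_of_le hab,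
    intervalIntegral.integral_eq_sub_of_hasDerivAt_of_le hab hcont hderiv
      ((intervalIntegrable_iff_integrableOn_Ioc_of_le hab).2 hint)]

theorem neg_log_pos {x : ℝ} (hx0 : 0 < x) (hx1 : x < 1) : 0 < -Real.log x :=
  neg_pos.2 (Real.log_neg hx0 hx1)

theorem hasDerivAt_neg_log_rpow_div {q x : ℝ} (hq : q ≠ 0) (hx0 : 0 < x) (hx1 : x < 1) :
    HasDerivAt (fun y => -(-Real.log y) ^ q / q) (x⁻¹ * (-Real.log x) ^ (q - 1)) x := by
  have hlog : HasDerivAt (fun y => -Real.log y) (-x⁻¹) x := (Real.hasDerivAt_log hx0.ne').neg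
  refine ((hlog.rpow_const (p := q) (Or.inl (neg_log_pos hx0 hx1).ne')).neg.div_const q)
    |>.congr_deriv ?_
  field_simp

theorem inv_mul_neg_log_rpow_nonneg {q x : ℝ} (hx0 : 0 < x) (hx1 : x < 1) :
    0 ≤ x⁻¹ * (-Real.log x) ^ q := by
  have := neg_log_pos hx0 hx1
  positivity

theorem lintegral_Ioo_inv_mul_neg_log_rpow {q a b : ℝ} (hq : q ≠ 0) (ha : 0 < a) (hab : a ≤ b)
    (hb : b < 1) :
    ∫⁻ x in Ioo a b, ENNReal.ofReal (x⁻¹ * (-Real.log x) ^ (q - 1))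
      = ENNReal.ofReal (((-Real.log a) ^ q - (-Real.log b) ^ q) / q) := by
  have hmem : ∀ x ∈ Icc a b, 0 < x ∧ x < 1 := fun x hx => ⟨ha.trans_le hx.1, hx.2.trans_lt hb⟩
  rw [lintegral_Ioo_ofReal_deriv_eq_sub hab
    (fun x hx => (hasDerivAt_neg_log_rpow_div hq (hmem x hx).1 (hmem x hx).2).continuousAt
      |>.continuousWithinAt)
    (fun x hx => hasDerivAt_neg_log_rpow_div hq (hmem x (Ioo_subset_Icc_self hx)).1
      (hmem x (Ioo_subset_Icc_self hx)).2)
    (fun x hx => inv_mul_neg_log_rpow_nonneg (hmem x (Ioo_subset_Icc_self hx)).1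
      (hmem x (Ioo_subset_Icc_self hx)).2)]
  ring_nf

theorem tendsto_neg_log_rpow_nhdsGT_zero {q : ℝ} (hq : q < 0) :
    Tendsto (fun x => (-Real.log x) ^ q) (𝓝[>] 0) (𝓝 0) := by
  have := (tendsto_rpow_neg_atTop (neg_pos.2 hq)).comp
    (tendsto_neg_atBot_atTop.comp Real.tendsto_log_nhdsGT_zero)
  simpa only [Function.comp_def, neg_neg] using this

theorem lintegral_Ioo_zero_inv_mul_neg_log_rpow {q b : ℝ} (hq : q < 0) (hb0 : 0 ≤ b)
    (hb : b < 1) :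
    ∫⁻ x in Ioo 0 b, ENNReal.ofReal (x⁻¹ * (-Real.log x) ^ (q - 1))
      = ENNReal.ofReal ((-Real.log b) ^ q / -q) := by
  have hcont : ContinuousOn (fun y => -(-Real.log y) ^ q / q) (Icc 0 b) := by
    intro x hx
    rcases hx.1.eq_or_lt with rfl | hx0
    -- `-log 0 = 0` and `0 ^ q = 0`, so the antiderivative takes its limit value `0` at `0`.
    · refine (continuousWithinAt_Ioi_iff_Ici.1 ?_).mono Icc_subset_Ici_self
      have := ((tendsto_neg_log_rpow_nhdsGT_zero hq).neg).div_const q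
      simpa [ContinuousWithinAt, Real.zero_rpow hq.ne] using this
    · exact (hasDerivAt_neg_log_rpow_div hq.ne hx0 (hx.2.trans_lt hb)).continuousAt
        |>.continuousWithinAt
  rw [lintegral_Ioo_ofReal_deriv_eq_sub hb0 hcont
    (fun x hx => hasDerivAt_neg_log_rpow_div hq.ne hx.1 (hx.2.trans hb))
    (fun x hx => inv_mul_neg_log_rpow_nonneg hx.1 (hx.2.trans hb))]
  simp [Real.zero_rpow hq.ne, div_neg, neg_div]

theorem sq_lintegral_mul_le {α : Type*} [MeasurableSpace α] (μ : Measure α) {u v : α → ℝ≥0∞}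
    (hu : AEMeasurable u μ) (hv : AEMeasurable v μ) :
    (∫⁻ x, u x * v x ∂μ) ^ 2 ≤ (∫⁻ x, u x ^ 2 ∂μ) * ∫⁻ x, v x ^ 2 ∂μ := by
  have h := ENNReal.lintegral_mul_le_Lp_mul_Lq μ Real.HolderConjugate.two_two hu hv
  simp only [ENNReal.rpow_two, one_div, Pi.mul_apply] at h
  calc (∫⁻ x, u x * v x ∂μ) ^ 2
      ≤ ((∫⁻ x, u x ^ 2 ∂μ) ^ (2⁻¹ : ℝ) * (∫⁻ x, v x ^ 2 ∂μ) ^ (2⁻¹ : ℝ)) ^ 2 := by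
        gcongr
    _ = (∫⁻ x, u x ^ 2 ∂μ) * ∫⁻ x, v x ^ 2 ∂μ := by
        rw [mul_pow, ← ENNReal.rpow_natCast, ← ENNReal.rpow_natCast, ← ENNReal.rpow_mul,
          ← ENNReal.rpow_mul]
        norm_num

theorem sq_setLIntegral_ofReal_le {α : Type*} [MeasurableSpace α] (μ : Measure α) {s : Set α}
    (hs : MeasurableSet s) {φ ω : α → ℝ} (hφ : Measurable φ) (hω : Measurable ω)
    (hφ0 : ∀ x ∈ s, 0 ≤ φ x) (hω0 : ∀ x ∈ s, 0 < ω x) :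
    (∫⁻ x in s, ENNReal.ofReal (φ x) ∂μ) ^ 2
      ≤ (∫⁻ x in s, ENNReal.ofReal (φ x ^ 2 * ω x) ∂μ) * ∫⁻ x in s, ENNReal.ofReal (ω x)⁻¹ ∂μ := by
  set u := fun x => ENNReal.ofReal (φ x * √(ω x))
  set v := fun x => ENNReal.ofReal (√(ω x))⁻¹
  have hsqrt : ∀ x ∈ s, 0 < √(ω x) := fun x hx => Real.sqrt_pos.2 (hω0 x hx)
  have huv : ∫⁻ x in s, ENNReal.ofReal (φ x) ∂μ = ∫⁻ x in s, u x * v x ∂μ := by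
    refine setLIntegral_congr_fun hs fun x hx => ?_
    rw [← ENNReal.ofReal_mul (mul_nonneg (hφ0 x hx) (hsqrt x hx).le),
      mul_inv_cancel_right₀ (hsqrt x hx).ne']
  have hu : ∫⁻ x in s, u x ^ 2 ∂μ = ∫⁻ x in s, ENNReal.ofReal (φ x ^ 2 * ω x) ∂μ := by
    refine setLIntegral_congr_fun hs fun x hx => ?_
    rw [← ENNReal.ofReal_pow (mul_nonneg (hφ0 x hx) (hsqrt x hx).le), mul_pow,
      Real.sq_sqrt (hω0 x hx).le]
  have hv : ∫⁻ x in s, v x ^ 2 ∂μ = ∫⁻ x in s, ENNReal.ofReal (ω x)⁻¹ ∂μ := by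
    refine setLIntegral_congr_fun hs fun x hx => ?_
    rw [← ENNReal.ofReal_pow (inv_nonneg.2 (hsqrt x hx).le), inv_pow,
      Real.sq_sqrt (hω0 x hx).le]
  rw [huv, ← hu, ← hv]
  exact sq_lintegral_mul_le _ (by fun_prop) (by fun_prop)

theorem lintegral_mul_setLIntegral_Ioo_comm (μ : Measure ℝ) [SFinite μ] {g w : ℝ → ℝ≥0∞}
    (hg : Measurable g) (hw : Measurable w) (a b : ℝ) :
    ∫⁻ r in Ioo a b, w r * ∫⁻ ρ in Ioo a r, g ρ ∂μ ∂μ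
      = ∫⁻ ρ in Ioo a b, g ρ * ∫⁻ r in Ioo ρ b, w r ∂μ ∂μ := by
  have hF : Measurable (Function.uncurry fun r ρ => (Iio r).indicator (fun ρ => w r * g ρ) ρ) :=
    Measurable.ite (measurableSet_lt measurable_snd measurable_fst) (by fun_prop) measurable_const
  calc ∫⁻ r in Ioo a b, w r * ∫⁻ ρ in Ioo a r, g ρ ∂μ ∂μ
      = ∫⁻ r in Ioo a b, ∫⁻ ρ in Ioo a b, (Iio r).indicator (fun ρ => w r * g ρ) ρ ∂μ ∂μ := by
        refine setLIntegral_congr_fun measurableSet_Ioo fun r hr => ?_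
        rw [lintegral_indicator measurableSet_Iio, Measure.restrict_restrict measurableSet_Iio,
          Iio_inter_Ioo, min_eq_left hr.2.le, lintegral_const_mul _ hg]
    _ = ∫⁻ ρ in Ioo a b, ∫⁻ r in Ioo a b, (Iio r).indicator (fun ρ => w r * g ρ) ρ ∂μ ∂μ :=
        lintegral_lintegral_swap hF.aemeasurable
    _ = ∫⁻ ρ in Ioo a b, g ρ * ∫⁻ r in Ioo ρ b, w r ∂μ ∂μ := by
        refine setLIntegral_congr_fun measurableSet_Ioo fun ρ hρ => ?_
        have hswap : ∀ r, (Iio r).indicator (fun ρ => w r * g ρ) ρ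
            = (Ioi ρ).indicator (fun r => g ρ * w r) r := fun r => by
          simp only [indicator_apply, mem_Iio, mem_Ioi, mul_comm]
        simp_rw [hswap]
        rw [lintegral_indicator measurableSet_Ioi, Measure.restrict_restrict measurableSet_Ioi,
          Ioi_inter_Ioo, max_eq_left hρ.1.le, lintegral_const_mul _ hw]

theorem sq_setLIntegral_Ioo_zero_le {φ : ℝ → ℝ} (hφ : Measurable φ) (hφ0 : ∀ x, 0 ≤ φ x)
    {ε r : ℝ} (hε : 0 < ε) (hr0 : 0 < r) (hr1 : r < 1) :
    (∫⁻ ρ in Ioo 0 r, ENNReal.ofReal (φ ρ)) ^ 2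
      ≤ (∫⁻ ρ in Ioo 0 r, ENNReal.ofReal (φ ρ ^ 2 * (ρ * (-Real.log ρ) ^ (ε + 1))))
        * ENNReal.ofReal ((-Real.log r) ^ (-ε) / ε) := by
  have hω : ∀ ρ ∈ Ioo 0 r, 0 < ρ * (-Real.log ρ) ^ (ε + 1) := fun ρ ⟨hρ0, hρr⟩ => by
    have := neg_log_pos hρ0 (hρr.trans hr1)
    positivity
  have hint : ∫⁻ ρ in Ioo 0 r, ENNReal.ofReal (ρ * (-Real.log ρ) ^ (ε + 1))⁻¹
      = ENNReal.ofReal ((-Real.log r) ^ (-ε) / ε) := by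
    have := lintegral_Ioo_zero_inv_mul_neg_log_rpow (neg_neg_of_pos hε) hr0.le hr1
    rw [neg_neg] at this
    rw [← this]
    refine setLIntegral_congr_fun measurableSet_Ioo fun ρ hρ => ?_
    rw [mul_inv, ← Real.rpow_neg (neg_log_pos hρ.1 (hρ.2.trans hr1)).le, neg_add']
  rw [← hint]
  exact sq_setLIntegral_ofReal_le volume measurableSet_Ioo hφ (by fun_prop)
    (fun x _ => hφ0 x) hω

theorem setLIntegral_Ioo_inv_mul_neg_log_rpow_le {ε ρ A : ℝ} (hε : 0 < ε) (hρ : 0 < ρ)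
    (hρA : ρ ≤ A) (hA1 : A < 1) :
    ∫⁻ r in Ioo ρ A, ENNReal.ofReal (r⁻¹ * (-Real.log r) ^ (ε - 1))
      ≤ ENNReal.ofReal ((-Real.log ρ) ^ ε / ε) := by
  rw [lintegral_Ioo_inv_mul_neg_log_rpow hε.ne' hρ hρA hA1]
  have := neg_log_pos (hρ.trans_le hρA) hA1
  gcongr
  exact sub_le_self _ (by positivity)

theorem mul_sq_setLIntegral_Ioo_zero_le {φ : ℝ → ℝ} (hφ : Measurable φ) (hφ0 : ∀ x, 0 ≤ φ x)
    {ε r : ℝ} (hε : 0 < ε) (hr0 : 0 < r) (hr1 : r < 1) :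
    ENNReal.ofReal (r⁻¹ * (-Real.log r) ^ (2 * ε - 1)) *
        (∫⁻ ρ in Ioo 0 r, ENNReal.ofReal (φ ρ)) ^ 2
      ≤ ENNReal.ofReal ε⁻¹ * (ENNReal.ofReal (r⁻¹ * (-Real.log r) ^ (ε - 1)) *
        ∫⁻ ρ in Ioo 0 r, ENNReal.ofReal (φ ρ ^ 2 * (ρ * (-Real.log ρ) ^ (ε + 1)))) := by
  have hl := neg_log_pos hr0 hr1
  have hweight : ENNReal.ofReal (r⁻¹ * (-Real.log r) ^ (2 * ε - 1)) *
      ENNReal.ofReal ((-Real.log r) ^ (-ε) / ε)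
        = ENNReal.ofReal ε⁻¹ * ENNReal.ofReal (r⁻¹ * (-Real.log r) ^ (ε - 1)) := by
    rw [← ENNReal.ofReal_mul (by positivity), ← ENNReal.ofReal_mul (by positivity),
      show 2 * ε - 1 = (ε - 1) + ε by ring, Real.rpow_add hl, Real.rpow_neg hl.le]
    congr 1
    field_simp
  calc _ ≤ ENNReal.ofReal (r⁻¹ * (-Real.log r) ^ (2 * ε - 1)) *
          ((∫⁻ ρ in Ioo 0 r, ENNReal.ofReal (φ ρ ^ 2 * (ρ * (-Real.log ρ) ^ (ε + 1)))) *
            ENNReal.ofReal ((-Real.log r) ^ (-ε) / ε)) := by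
        gcongr
        exact sq_setLIntegral_Ioo_zero_le hφ hφ0 hε hr0 hr1
    _ = _ := by rw [mul_comm (lintegral _ _), ← mul_assoc, hweight, mul_assoc]

theorem mul_setLIntegral_Ioo_inv_mul_neg_log_rpow_le {c ε ρ A : ℝ} (hc : 0 ≤ c) (hε : 0 < ε)
    (hρ : 0 < ρ) (hρA : ρ ≤ A) (hA1 : A < 1) :
    ENNReal.ofReal (c * (ρ * (-Real.log ρ) ^ (ε + 1))) *
        ∫⁻ r in Ioo ρ A, ENNReal.ofReal (r⁻¹ * (-Real.log r) ^ (ε - 1))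
      ≤ ENNReal.ofReal ε⁻¹ * ENNReal.ofReal (c * ρ * (-Real.log ρ) ^ (2 * ε + 1)) := by
  have hl := neg_log_pos hρ (hρA.trans_lt hA1)
  calc _ ≤ ENNReal.ofReal (c * (ρ * (-Real.log ρ) ^ (ε + 1))) *
          ENNReal.ofReal ((-Real.log ρ) ^ ε / ε) := by
        gcongr
        exact setLIntegral_Ioo_inv_mul_neg_log_rpow_le hε hρ hρA hA1
    _ = _ := by
        rw [← ENNReal.ofReal_mul (by positivity), ← ENNReal.ofReal_mul (by positivity),
          show 2 * ε + 1 = (ε + 1) + ε by ring, Real.rpow_add hl (ε + 1) ε]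
        congr 1
        field_simp

theorem lintegral_Ioo_hardy_neg_log {ε A : ℝ} (hε : 0 < ε) (hA1 : A < 1) {φ : ℝ → ℝ}
    (hφ : Measurable φ) (hφ0 : ∀ x, 0 ≤ φ x) :
    ∫⁻ r in Ioo 0 A, ENNReal.ofReal (r⁻¹ * (-Real.log r) ^ (2 * ε - 1)) *
        (∫⁻ ρ in Ioo 0 r, ENNReal.ofReal (φ ρ)) ^ 2
      ≤ ENNReal.ofReal (ε ^ 2)⁻¹ *
        ∫⁻ r in Ioo 0 A, ENNReal.ofReal (φ r ^ 2 * r * (-Real.log r) ^ (2 * ε + 1)) := by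
  set w : ℝ → ℝ≥0∞ := fun r => ENNReal.ofReal (r⁻¹ * (-Real.log r) ^ (ε - 1))
  set g : ℝ → ℝ≥0∞ := fun ρ => ENNReal.ofReal (φ ρ ^ 2 * (ρ * (-Real.log ρ) ^ (ε + 1)))
  calc _ ≤ ∫⁻ r in Ioo 0 A, ENNReal.ofReal ε⁻¹ * (w r * ∫⁻ ρ in Ioo 0 r, g ρ) :=
        setLIntegral_mono' measurableSet_Ioo fun r ⟨hr0, hrA⟩ =>
          mul_sq_setLIntegral_Ioo_zero_le hφ hφ0 hε hr0 (hrA.trans hA1)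
    _ = ENNReal.ofReal ε⁻¹ * ∫⁻ ρ in Ioo 0 A, g ρ * ∫⁻ r in Ioo ρ A, w r := by
        rw [lintegral_const_mul' _ _ ENNReal.ofReal_ne_top,
          lintegral_mul_setLIntegral_Ioo_comm volume (by fun_prop) (by fun_prop)]
    _ ≤ ENNReal.ofReal ε⁻¹ * ∫⁻ ρ in Ioo 0 A,
          ENNReal.ofReal ε⁻¹ * ENNReal.ofReal (φ ρ ^ 2 * ρ * (-Real.log ρ) ^ (2 * ε + 1)) := by
        gcongr ENNReal.ofReal ε⁻¹ * ?_
        exact setLIntegral_mono' measurableSet_Ioo fun ρ ⟨hρ0, hρA⟩ =>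
          mul_setLIntegral_Ioo_inv_mul_neg_log_rpow_le (sq_nonneg _) hε hρ0 hρA.le hA1
    _ = _ := by
        rw [lintegral_const_mul' _ _ ENNReal.ofReal_ne_top, ← mul_assoc,
          ← ENNReal.ofReal_mul (by positivity), sq, mul_inv]

theorem hardy_weighted_zero_mode_k_gt_one_general (k : ℝ) (hk : 1 < k)
    (A : ℝ) (hA1 : A < 1) :
    ∃ C : ℝ, 0 < C ∧ ∀ f : ℝ → ℂ, Measurable f →
      ∫⁻ r in Set.Ioo (0 : ℝ) A,
          ENNReal.ofReal (r⁻¹ * (-Real.log r) ^ (k - 2)) *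
            (∫⁻ ρ in Set.Ioo (0 : ℝ) r, ENNReal.ofReal ‖f ρ‖) ^ 2
        ≤ ENNReal.ofReal C *
          ∫⁻ r in Set.Ioo (0 : ℝ) A,
            ENNReal.ofReal (‖f r‖ ^ 2 * r * (-Real.log r) ^ k) := by
  have hε : 0 < (k - 1) / 2 := by linarith
  refine ⟨(((k - 1) / 2) ^ 2)⁻¹, by positivity, fun f hf => ?_⟩
  have := lintegral_Ioo_hardy_neg_log hε hA1 hf.norm fun x => norm_nonneg (f x)
  rwa [show 2 * ((k - 1) / 2) - 1 = k - 2 by ring, show 2 * ((k - 1) / 2) + 1 = k by ring]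
    at this

/-- Weighted Hardy-type inequality, zero Fourier mode, weight exponent `k > 1`: for every
`A ∈ (0,1)` there is `C > 0` such that for every measurable `f : (0,A) → ℂ`,
`∫₀^A r⁻¹ (-log r)^(k-2) (∫₀^r |f ρ| dρ)² dr ≤ C ∫₀^A |f r|² r (-log r)^k dr`
in `[0,∞]`. -/
theorem hardy_weighted_zero_mode_k_gt_one (k : ℝ) (hk : 1 < k)
    (A : ℝ) (hA0 : 0 < A) (hA1 : A < 1) :
    ∃ C : ℝ, 0 < C ∧ ∀ f : ℝ → ℂ, Measurable f →
      ∫⁻ r in Set.Ioo (0 : ℝ) A,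
          ENNReal.ofReal (r⁻¹ * (-Real.log r) ^ (k - 2)) *
            (∫⁻ ρ in Set.Ioo (0 : ℝ) r, ENNReal.ofReal ‖f ρ‖) ^ 2
        ≤ ENNReal.ofReal C *
          ∫⁻ r in Set.Ioo (0 : ℝ) A,
            ENNReal.ofReal (‖f r‖ ^ 2 * r * (-Real.log r) ^ k) :=
  hardy_weighted_zero_mode_k_gt_one_general k hk A hA1
end

section
/- For every real number k and every A ∈ (0,1) there is a constant C > 0 such that for every real m ≥ 1 and every measurable function f : (0,A) → ℂ one has ∫₀^A r^{2m-1} (-log r)^{k-2} ( ∫_r^A ρ^{-m} |f(ρ)| dρ )² dr ≤ C · ∫₀^A |f(r)|² r (-log r)^k dr (an inequality in [0, ∞]). -/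
/-!
Cauchy–Schwarz with the weight `ρ ^ (2m+1) (-log ρ) ^ k` bounds the square of the inner integral
by `∫_r^A |f|² ρ (-log ρ) ^ k` times `∫_r^A (ρ ^ (2m+1) (-log ρ) ^ k)⁻¹`. Since
`x ↦ x ^ m (-log x) ^ k` is increasing on `(0, A]` up to a constant independent of `m ≥ 1`
(the power of `x` beats the power of the logarithm), the second factor is
`O((r ^ (2m) (-log r) ^ k)⁻¹)`. Against the outer weight this leaves `(r log² r)⁻¹`, a derivative
of `(-log r)⁻¹`, whose integral over `(0, A)` is at most `(-log A)⁻¹`.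
-/

open MeasureTheory Set Real
open scoped ENNReal

lemma rpow_div_le_mul_exp_sub {a s t k : ℝ} (ha : 0 < a) (has : a ≤ s) (hst : s ≤ t)
    (hk : 0 ≤ k) : (t / s) ^ k ≤ (1 + k / a) ^ k * exp (t - s) := by
  rcases hk.eq_or_lt with rfl | hk
  · simpa using hst
  have hs : 0 < s := ha.trans_le has
  have hts : 0 ≤ t - s := by linarith
  have hratio : t / s ≤ (1 + k / a) * (1 + (t - s) / k) :=
    calc t / s = 1 + (t - s) / s := by field_simp; ring
      _ ≤ 1 + (t - s) / a := by gcongr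
      _ ≤ 1 + (t - s) / a + (k / a + (t - s) / k) := by
        have : 0 ≤ k / a + (t - s) / k := by positivity
        linarith
      _ = (1 + k / a) * (1 + (t - s) / k) := by field_simp; ring
  have hexp : (1 + (t - s) / k) ^ k ≤ exp (t - s) :=
    calc (1 + (t - s) / k) ^ k ≤ exp ((t - s) / k) ^ k :=
          rpow_le_rpow (by positivity) (by linarith [add_one_le_exp ((t - s) / k)]) hk.le
      _ = exp (t - s) := by rw [← exp_mul, div_mul_cancel₀ _ hk.ne']
  calc (t / s) ^ k ≤ ((1 + k / a) * (1 + (t - s) / k)) ^ k :=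
        rpow_le_rpow (div_nonneg (hs.le.trans hst) hs.le) hratio hk.le
    _ = (1 + k / a) ^ k * (1 + (t - s) / k) ^ k := mul_rpow (by positivity) (by positivity)
    _ ≤ (1 + k / a) ^ k * exp (t - s) := by gcongr

lemma rpow_mul_neg_log_rpow_le {A k m r ρ : ℝ} (hr : 0 < r) (hrρ : r ≤ ρ) (hρA : ρ ≤ A)
    (hA : A < 1) (hm : 1 ≤ m) :
    r ^ m * (-log r) ^ k ≤ (1 + |k| / -log A) ^ |k| * (ρ ^ m * (-log ρ) ^ k) := by
  have hρ : 0 < ρ := hr.trans_le hrρ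
  have ha : 0 < -log A := neg_pos.2 (log_neg (hρ.trans_le hρA) hA)
  have has : -log A ≤ -log ρ := neg_le_neg (log_le_log hρ hρA)
  have hst : -log ρ ≤ -log r := neg_le_neg (log_le_log hr hrρ)
  have hs : 0 < -log ρ := ha.trans_le has
  set C := (1 + |k| / -log A) ^ |k|
  have hratio : (-log r / -log ρ) ^ k ≤ C * exp (-log r - -log ρ) :=
    (rpow_le_rpow_of_exponent_le ((one_le_div hs).2 hst) (le_abs_self k)).trans
      (rpow_div_le_mul_exp_sub ha has hst (abs_nonneg k))
  have hexp : r ^ m * exp (-log r - -log ρ) ≤ ρ ^ m := by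
    rw [rpow_def_of_pos hr, rpow_def_of_pos hρ, ← exp_add, exp_le_exp]
    nlinarith [log_le_log hr hrρ]
  calc r ^ m * (-log r) ^ k = (-log r / -log ρ) ^ k * r ^ m * (-log ρ) ^ k := by
        rw [div_rpow (hs.le.trans hst) hs.le]; field_simp
    _ ≤ C * exp (-log r - -log ρ) * r ^ m * (-log ρ) ^ k := by gcongr
    _ = C * (r ^ m * exp (-log r - -log ρ)) * (-log ρ) ^ k := by ring
    _ ≤ C * ρ ^ m * (-log ρ) ^ k := by gcongr
    _ = C * (ρ ^ m * (-log ρ) ^ k) := by ring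

lemma lintegral_Ioo_ofReal_deriv_le {f f' : ℝ → ℝ} {a b c d : ℝ}
    (hf : ∀ x ∈ Ioo a b, HasDerivAt f (f' x) x) (hf' : ∀ x ∈ Ioo a b, 0 ≤ f' x)
    (hmaps : MapsTo f (Ioo a b) (Icc c d)) :
    ∫⁻ x in Ioo a b, ENNReal.ofReal (f' x) ≤ ENNReal.ofReal (d - c) := by
  have hmono : MonotoneOn f (Ioo a b) := by
    refine monotoneOn_of_deriv_nonneg (convex_Ioo a b)
      (fun x hx ↦ (hf x hx).continuousAt.continuousWithinAt) ?_ ?_ <;> rw [interior_Ioo]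
    · exact fun x hx ↦ (hf x hx).differentiableAt.differentiableWithinAt
    · exact fun x hx ↦ (hf x hx).deriv ▸ hf' x hx
  rw [lintegral_deriv_eq_volume_image_of_monotoneOn measurableSet_Ioo
    (fun x hx ↦ (hf x hx).hasDerivWithinAt) hmono, ← Real.volume_Icc]
  exact measure_mono hmaps.image_subset

lemma ENNReal.lintegral_sq_le_lintegral_sq_mul_mul_lintegral_inv {α : Type*} [MeasurableSpace α]
    {μ : Measure α} {f w : α → ℝ≥0∞} (hf : AEMeasurable f μ) (hw : AEMeasurable w μ)
    (hw0 : ∀ᵐ x ∂μ, w x ≠ 0) (hwtop : ∀ᵐ x ∂μ, w x ≠ ∞) :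
    (∫⁻ x, f x ∂μ) ^ 2 ≤ (∫⁻ x, f x ^ 2 * w x ∂μ) * ∫⁻ x, (w x)⁻¹ ∂μ := by
  have hsq : ∀ x : ℝ≥0∞, (x ^ (1 / 2 : ℝ)) ^ 2 = x := fun x ↦ by
    rw [← ENNReal.rpow_natCast, ← ENNReal.rpow_mul]; norm_num
  set v : α → ℝ≥0∞ := fun x ↦ w x ^ (1 / 2 : ℝ)
  have hv : AEMeasurable v μ := hw.pow_const _
  have hfv : ∀ᵐ x ∂μ, f x = f x * v x * (v x)⁻¹ := by
    filter_upwards [hw0, hwtop] with x h0 htop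
    rw [mul_assoc, ENNReal.mul_inv_cancel (by simp [v, h0]) (by simp [v, htop]), mul_one]
  have holder := ENNReal.lintegral_mul_le_Lp_mul_Lq μ Real.HolderConjugate.two_two
    (hf.mul hv) hv.inv
  calc (∫⁻ x, f x ∂μ) ^ 2
      ≤ ((∫⁻ x, (f x * v x) ^ (2 : ℝ) ∂μ) ^ (1 / 2 : ℝ)
          * (∫⁻ x, (v x)⁻¹ ^ (2 : ℝ) ∂μ) ^ (1 / 2 : ℝ)) ^ 2 := by
        rw [lintegral_congr_ae hfv]; gcongr; exact holder
    _ = (∫⁻ x, f x ^ 2 * w x ∂μ) * ∫⁻ x, (w x)⁻¹ ∂μ := by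
        simp only [ENNReal.rpow_two, mul_pow, ← ENNReal.inv_pow, hsq, v]

lemma lintegral_Ioo_inv_rpow_mul_neg_log_rpow_le {A C k m r : ℝ} (hr : 0 < r) (hrA : r < A)
    (hA : A < 1) (hm : 1 ≤ m) (hC0 : 0 ≤ C)
    (hC : ∀ ρ ∈ Ioo r A, r ^ m * (-log r) ^ k ≤ C * (ρ ^ m * (-log ρ) ^ k)) :
    ∫⁻ ρ in Ioo r A, ENNReal.ofReal ((ρ ^ (2 * m + 1) * (-log ρ) ^ k)⁻¹)
      ≤ ENNReal.ofReal (C * (r ^ (2 * m) * (-log r) ^ k)⁻¹) := by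
  have hm0 : 0 < m := zero_lt_one.trans_le hm
  have hlogr : 0 < -log r := neg_pos.2 (log_neg hr (hrA.trans hA))
  have hK : 0 ≤ C * (r ^ m * (-log r) ^ k)⁻¹ := by positivity
  have hpt : ∀ ρ ∈ Ioo r A, (ρ ^ (2 * m + 1) * (-log ρ) ^ k)⁻¹
      ≤ C * (r ^ m * (-log r) ^ k)⁻¹ * ρ ^ (-m - 1) := by
    intro ρ hρ
    have hρ0 : 0 < ρ := hr.trans hρ.1
    have hlogρ : 0 < -log ρ := neg_pos.2 (log_neg hρ0 (hρ.2.trans hA))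
    have hsplit : (ρ ^ (2 * m + 1) * (-log ρ) ^ k)⁻¹
        = (ρ ^ m * (-log ρ) ^ k)⁻¹ * ρ ^ (-m - 1) := by
      rw [show 2 * m + 1 = m + (m + 1) by ring, show -m - 1 = -(m + 1) by ring, rpow_add hρ0,
        rpow_neg hρ0.le]
      ring
    rw [hsplit]
    gcongr
    rw [← div_eq_mul_inv, le_div_iff₀ (by positivity), inv_mul_le_iff₀ (by positivity)]
    linarith [hC ρ hρ]
  have hderiv : ∀ ρ ∈ Ioo r A, HasDerivAt (fun x ↦ -(x ^ (-m) / m)) (ρ ^ (-m - 1)) ρ := by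
    intro ρ hρ
    refine ((hasDerivAt_rpow_const (Or.inl (hr.trans hρ.1).ne')).div_const m).neg.congr_deriv ?_
    field_simp
  have hmaps : MapsTo (fun x ↦ -(x ^ (-m) / m)) (Ioo r A) (Icc (-(r ^ (-m) / m)) 0) := by
    intro ρ hρ
    have := hr.trans hρ.1
    refine ⟨neg_le_neg (div_le_div_of_nonneg_right
      (rpow_le_rpow_of_nonpos hr hρ.1.le (by linarith)) hm0.le), ?_⟩
    simp only [Left.neg_nonpos_iff]
    positivity
  have hsplit : (r ^ (2 * m) * (-log r) ^ k)⁻¹ = (r ^ m * (-log r) ^ k)⁻¹ * r ^ (-m) := by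
    rw [two_mul, rpow_add hr, rpow_neg hr.le]
    ring
  calc ∫⁻ ρ in Ioo r A, ENNReal.ofReal ((ρ ^ (2 * m + 1) * (-log ρ) ^ k)⁻¹)
      ≤ ∫⁻ ρ in Ioo r A,
          ENNReal.ofReal (C * (r ^ m * (-log r) ^ k)⁻¹) * ENNReal.ofReal (ρ ^ (-m - 1)) :=
        setLIntegral_mono' measurableSet_Ioo fun ρ hρ ↦ by
          rw [← ENNReal.ofReal_mul hK]
          exact ENNReal.ofReal_le_ofReal (hpt ρ hρ)
    _ = ENNReal.ofReal (C * (r ^ m * (-log r) ^ k)⁻¹)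
          * ∫⁻ ρ in Ioo r A, ENNReal.ofReal (ρ ^ (-m - 1)) :=
        lintegral_const_mul' _ _ ENNReal.ofReal_ne_top
    _ ≤ ENNReal.ofReal (C * (r ^ m * (-log r) ^ k)⁻¹) * ENNReal.ofReal (r ^ (-m) / m) := by
        gcongr
        refine (lintegral_Ioo_ofReal_deriv_le hderiv (fun ρ hρ ↦ ?_) hmaps).trans_eq ?_
        · have := hr.trans hρ.1
          positivity
        · rw [zero_sub, neg_neg]
    _ = ENNReal.ofReal (C * (r ^ (2 * m) * (-log r) ^ k)⁻¹ / m) := by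
        rw [← ENNReal.ofReal_mul hK, hsplit]
        congr 1
        ring
    _ ≤ ENNReal.ofReal (C * (r ^ (2 * m) * (-log r) ^ k)⁻¹) :=
        ENNReal.ofReal_le_ofReal (div_le_self (by positivity) hm)

lemma lintegral_Ioo_zero_inv_mul_neg_log_sq_le {A : ℝ} (hA : A < 1) :
    ∫⁻ r in Ioo 0 A, ENNReal.ofReal ((r * (-log r) ^ 2)⁻¹) ≤ ENNReal.ofReal (-log A)⁻¹ := by
  have hlog : ∀ r ∈ Ioo 0 A, 0 < -log r := fun r hr ↦ neg_pos.2 (log_neg hr.1 (hr.2.trans hA))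
  have hderiv : ∀ r ∈ Ioo 0 A, HasDerivAt (fun x ↦ (-log x)⁻¹) (r * (-log r) ^ 2)⁻¹ r := by
    intro r hr
    refine ((hasDerivAt_log hr.1.ne').neg.inv (hlog r hr).ne').congr_deriv ?_
    simp only [Pi.neg_apply, neg_sq]
    field_simp
  have hmaps : MapsTo (fun x ↦ (-log x)⁻¹) (Ioo 0 A) (Icc 0 (-log A)⁻¹) := fun r hr ↦
    ⟨(inv_pos.2 (hlog r hr)).le, inv_anti₀ (neg_pos.2 (log_neg (hr.1.trans hr.2) hA))
      (neg_le_neg (log_le_log hr.1 hr.2.le))⟩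
  refine (lintegral_Ioo_ofReal_deriv_le hderiv (fun r hr ↦ ?_) hmaps).trans_eq (by rw [sub_zero])
  have := hr.1
  positivity

lemma ofReal_mul_sq_lintegral_Ioo_rpow_neg_mul_le {A C k m r : ℝ} {g : ℝ → ℝ}
    (hg : Measurable g) (hg0 : ∀ x, 0 ≤ g x) (hr : 0 < r) (hrA : r < A) (hA : A < 1) (hm : 1 ≤ m)
    (hC0 : 0 ≤ C) (hC : ∀ ρ ∈ Ioo r A, r ^ m * (-log r) ^ k ≤ C * (ρ ^ m * (-log ρ) ^ k)) :
    ENNReal.ofReal (r ^ (2 * m - 1) * (-log r) ^ (k - 2))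
        * (∫⁻ ρ in Ioo r A, ENNReal.ofReal (ρ ^ (-m) * g ρ)) ^ 2
      ≤ ENNReal.ofReal (C * (r * (-log r) ^ 2)⁻¹)
        * ∫⁻ ρ in Ioo r A, ENNReal.ofReal (g ρ ^ 2 * ρ * (-log ρ) ^ k) := by
  have hlogr : 0 < -log r := neg_pos.2 (log_neg hr (hrA.trans hA))
  have hweight : ∀ ρ ∈ Ioo r A, 0 < ρ ^ (2 * m + 1) * (-log ρ) ^ k := fun ρ hρ ↦ by
    have hρ0 : 0 < ρ := hr.trans hρ.1
    have hlogρ : 0 < -log ρ := neg_pos.2 (log_neg hρ0 (hρ.2.trans hA))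
    positivity
  have hCS := ENNReal.lintegral_sq_le_lintegral_sq_mul_mul_lintegral_inv
    (μ := volume.restrict (Ioo r A)) (f := fun ρ ↦ ENNReal.ofReal (ρ ^ (-m) * g ρ))
    (w := fun ρ ↦ ENNReal.ofReal (ρ ^ (2 * m + 1) * (-log ρ) ^ k)) (by fun_prop) (by fun_prop)
    ((ae_restrict_iff' measurableSet_Ioo).2 (ae_of_all _ fun ρ hρ ↦
      (ENNReal.ofReal_pos.2 (hweight ρ hρ)).ne'))
    (ae_of_all _ fun _ ↦ ENNReal.ofReal_ne_top)
  have hsq : ∫⁻ ρ in Ioo r A, ENNReal.ofReal (ρ ^ (-m) * g ρ) ^ 2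
        * ENNReal.ofReal (ρ ^ (2 * m + 1) * (-log ρ) ^ k)
      = ∫⁻ ρ in Ioo r A, ENNReal.ofReal (g ρ ^ 2 * ρ * (-log ρ) ^ k) := by
    refine setLIntegral_congr_fun measurableSet_Ioo fun ρ hρ ↦ ?_
    have hρ0 : 0 < ρ := hr.trans hρ.1
    have := hg0 ρ
    rw [← ENNReal.ofReal_pow (by positivity), ← ENNReal.ofReal_mul (by positivity)]
    have hpow : (ρ ^ (-m)) ^ 2 * ρ ^ (2 * m + 1) = ρ := by
      rw [← rpow_natCast, ← rpow_mul hρ0.le, ← rpow_add hρ0]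
      norm_num [show -(m * 2) + (2 * m + 1) = 1 by ring]
    congr 1
    linear_combination (g ρ ^ 2 * (-log ρ) ^ k) * hpow
  have hinv : ∫⁻ ρ in Ioo r A, (ENNReal.ofReal (ρ ^ (2 * m + 1) * (-log ρ) ^ k))⁻¹
      = ∫⁻ ρ in Ioo r A, ENNReal.ofReal ((ρ ^ (2 * m + 1) * (-log ρ) ^ k)⁻¹) :=
    setLIntegral_congr_fun measurableSet_Ioo fun ρ hρ ↦
      (ENNReal.ofReal_inv_of_pos (hweight ρ hρ)).symm
  rw [hsq, hinv] at hCS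
  have hW : 0 ≤ r ^ (2 * m - 1) * (-log r) ^ (k - 2) := by positivity
  calc _ ≤ ENNReal.ofReal (r ^ (2 * m - 1) * (-log r) ^ (k - 2))
        * ((∫⁻ ρ in Ioo r A, ENNReal.ofReal (g ρ ^ 2 * ρ * (-log ρ) ^ k))
          * ENNReal.ofReal (C * (r ^ (2 * m) * (-log r) ^ k)⁻¹)) := by
        gcongr
        refine hCS.trans ?_
        gcongr
        exact lintegral_Ioo_inv_rpow_mul_neg_log_rpow_le hr hrA hA hm hC0 hC
    _ = ENNReal.ofReal (r ^ (2 * m - 1) * (-log r) ^ (k - 2)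
          * (C * (r ^ (2 * m) * (-log r) ^ k)⁻¹))
        * ∫⁻ ρ in Ioo r A, ENNReal.ofReal (g ρ ^ 2 * ρ * (-log ρ) ^ k) := by
        rw [ENNReal.ofReal_mul hW]; ring
    _ = _ := by
        congr 2
        rw [rpow_sub hr, rpow_sub hlogr, rpow_one, rpow_two]
        field_simp

/-- Weighted Hardy-type inequality (inner integral up to `A`): for every real `k` and
`A ∈ (0,1)` there is `C > 0` such that for every real `m ≥ 1` and measurable
`f : (0,A) → ℂ`,
`∫₀^A r^(2m-1) (-log r)^(k-2) (∫_r^A ρ^(-m) |f ρ| dρ)² dr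
  ≤ C ∫₀^A |f r|² r (-log r)^k dr` in `[0,∞]`. -/
theorem hardy_weighted_inner_to_A (k : ℝ) (A : ℝ) (hA0 : 0 < A) (hA1 : A < 1) :
    ∃ C : ℝ, 0 < C ∧ ∀ m : ℝ, 1 ≤ m → ∀ f : ℝ → ℂ, Measurable f →
      ∫⁻ r in Set.Ioo (0 : ℝ) A,
          ENNReal.ofReal (r ^ (2 * m - 1) * (-Real.log r) ^ (k - 2)) *
            (∫⁻ ρ in Set.Ioo r A,
              ENNReal.ofReal (ρ ^ (-m) * ‖f ρ‖)) ^ 2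
        ≤ ENNReal.ofReal C *
          ∫⁻ r in Set.Ioo (0 : ℝ) A,
            ENNReal.ofReal (‖f r‖ ^ 2 * r * (-Real.log r) ^ k) := by
  have hlogA : 0 < -log A := neg_pos.2 (log_neg hA0 hA1)
  set C := (1 + |k| / -log A) ^ |k|
  have hC : 0 < C := rpow_pos_of_pos (by positivity) _
  refine ⟨C * (-log A)⁻¹, by positivity, fun m hm f hf ↦ ?_⟩
  set T := ∫⁻ r in Ioo 0 A, ENNReal.ofReal (‖f r‖ ^ 2 * r * (-log r) ^ k)
  calc _ ≤ ∫⁻ r in Ioo 0 A, ENNReal.ofReal C * ENNReal.ofReal ((r * (-log r) ^ 2)⁻¹) * T :=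
        setLIntegral_mono' measurableSet_Ioo fun r hr ↦ by
          rw [← ENNReal.ofReal_mul hC.le]
          refine (ofReal_mul_sq_lintegral_Ioo_rpow_neg_mul_le hf.norm (fun _ ↦ norm_nonneg _)
            hr.1 hr.2 hA1 hm hC.le fun ρ hρ ↦
              rpow_mul_neg_log_rpow_le hr.1 hρ.1.le hρ.2.le hA1 hm).trans ?_
          gcongr
          exact lintegral_mono_set (Ioo_subset_Ioo_left hr.1.le)
    _ = ENNReal.ofReal C * (∫⁻ r in Ioo 0 A, ENNReal.ofReal ((r * (-log r) ^ 2)⁻¹)) * T := by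
        rw [lintegral_mul_const _ (by fun_prop), lintegral_const_mul' _ _ ENNReal.ofReal_ne_top]
    _ ≤ ENNReal.ofReal (C * (-log A)⁻¹) * T := by
        rw [ENNReal.ofReal_mul hC.le]
        gcongr
        exact lintegral_Ioo_zero_inv_mul_neg_log_sq_le hA1
end

section
/- For all real numbers k, l, every A ∈ (0,1), and every real n ≤ -1, there is a constant C > 0 (depending only on k, l, A) such that for every measurable function f : (0,A) × (0,A) → ℂ one has ∫₀^A ∫₀^A r₁ r₂^{2n-1} (-log r₁)^k (-log r₂)^{l-2} ( ∫₀^{r₂} ρ^{-n} |f(r₁, ρ)| dρ )² dr₂ dr₁ ≤ C · ∫₀^A ∫₀^A |f(r₁, r₂)|² r₁ r₂ (-log r₁)^k (-log r₂)^l dr₂ dr₁ (an inequality in [0, ∞]). -/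
/-!
Freezing `r₁`, its weights factor out and the claim reduces to a one-variable inequality for
`g ≥ 0`, with `L = -log`. By Cauchy–Schwarz,
`(∫₀^r ρ^(-n) g)² ≤ (∫₀^r ρ^(-2n-1) L(ρ)^(-l)) · (∫₀^r ρ L(ρ)^l g²)`.
For `ρ ≤ r ≤ A` and any real `s`, `L(ρ)^s ≤ K · (r/ρ) · L(r)^s`; as `-2n-1 ≥ 1`, the first
factor is therefore at most `K r^(-2n) L(r)^(-l)`. Bounding the second factor by the full
right-hand side leaves the weight `r⁻¹ L(r)^(-2)`, whose integral over `(0, A)` is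
`-1 / log A < ∞`.
-/

open MeasureTheory Set Real
open scoped ENNReal

section CauchySchwarz

variable {α : Type*} [MeasurableSpace α] {μ : Measure α}

theorem ENNReal.lintegral_mul_sq_le {f g : α → ℝ≥0∞} (hf : AEMeasurable f μ)
    (hg : AEMeasurable g μ) :
    (∫⁻ x, f x * g x ∂μ) ^ 2 ≤ (∫⁻ x, f x ^ 2 ∂μ) * ∫⁻ x, g x ^ 2 ∂μ := by
  have hHolder := ENNReal.lintegral_mul_le_Lp_mul_Lq μ Real.HolderConjugate.two_two hf hg
  simp only [ENNReal.rpow_two, Pi.mul_apply] at hHolder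
  calc (∫⁻ x, f x * g x ∂μ) ^ 2
      ≤ ((∫⁻ x, f x ^ 2 ∂μ) ^ (1 / 2 : ℝ) * (∫⁻ x, g x ^ 2 ∂μ) ^ (1 / 2 : ℝ)) ^ 2 := by
        gcongr
    _ = (∫⁻ x, f x ^ 2 ∂μ) * ∫⁻ x, g x ^ 2 ∂μ := by
        rw [mul_pow, one_div, ← ENNReal.rpow_two, ← ENNReal.rpow_two,
          ENNReal.rpow_inv_rpow two_ne_zero, ENNReal.rpow_inv_rpow two_ne_zero]

theorem ENNReal.lintegral_mul_sq_le_of_sq_le_mul {w a b g : α → ℝ≥0∞} (ha : AEMeasurable a μ)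
    (hb : AEMeasurable b μ) (hg : AEMeasurable g μ) (hw : ∀ᵐ x ∂μ, w x ^ 2 ≤ a x * b x) :
    (∫⁻ x, w x * g x ∂μ) ^ 2 ≤ (∫⁻ x, a x ∂μ) * ∫⁻ x, b x * g x ^ 2 ∂μ := by
  have sqrt_sq (y : ℝ≥0∞) : (y ^ (2⁻¹ : ℝ)) ^ 2 = y := by
    rw [← ENNReal.rpow_two, ENNReal.rpow_inv_rpow two_ne_zero]
  have hw' : ∀ᵐ x ∂μ, w x * g x ≤ a x ^ (2⁻¹ : ℝ) * (b x ^ (2⁻¹ : ℝ) * g x) := by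
    filter_upwards [hw] with x hx
    rw [← mul_assoc, ← ENNReal.mul_rpow_of_nonneg _ _ (by norm_num)]
    gcongr
    calc w x = (w x ^ 2) ^ (2⁻¹ : ℝ) := by
          rw [← ENNReal.rpow_two, ENNReal.rpow_rpow_inv two_ne_zero]
      _ ≤ (a x * b x) ^ (2⁻¹ : ℝ) := by gcongr
  calc (∫⁻ x, w x * g x ∂μ) ^ 2
      ≤ (∫⁻ x, a x ^ (2⁻¹ : ℝ) * (b x ^ (2⁻¹ : ℝ) * g x) ∂μ) ^ 2 := by
        gcongr ?_ ^ 2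
        exact lintegral_mono_ae hw'
    _ ≤ (∫⁻ x, (a x ^ (2⁻¹ : ℝ)) ^ 2 ∂μ) * ∫⁻ x, (b x ^ (2⁻¹ : ℝ) * g x) ^ 2 ∂μ :=
        ENNReal.lintegral_mul_sq_le (ha.pow_const _) ((hb.pow_const _).mul hg)
    _ = (∫⁻ x, a x ∂μ) * ∫⁻ x, b x * g x ^ 2 ∂μ := by
        simp only [mul_pow, sqrt_sq]

end CauchySchwarz

namespace Real

theorem exists_neg_log_rpow_le_mul_div (s : ℝ) {A : ℝ} (hA0 : 0 < A) (hA1 : A < 1) :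
    ∃ K > 0, ∀ ⦃ρ r : ℝ⦄, 0 < ρ → ρ ≤ r → r ≤ A →
      (-log ρ) ^ s ≤ K * (r / ρ) * (-log r) ^ s := by
  have hLA : 0 < -log A := by linarith [log_neg hA0 hA1]
  rcases le_or_gt s 0 with hs | hs
  · refine ⟨1, one_pos, fun ρ r hρ hρr hrA => ?_⟩
    have hLr : 0 < -log r := by linarith [log_neg (hρ.trans_le hρr) (hrA.trans_lt hA1)]
    have hLrρ : -log r ≤ -log ρ := by linarith [log_le_log hρ hρr]
    calc (-log ρ) ^ s ≤ (-log r) ^ s := rpow_le_rpow_of_nonpos hLr hLrρ hs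
      _ ≤ 1 * (r / ρ) * (-log r) ^ s := by
          rw [one_mul]
          exact le_mul_of_one_le_left (by positivity) ((one_le_div hρ).2 hρr)
  refine ⟨(1 + s / -log A) ^ s, by positivity, fun ρ r hρ hρr hrA => ?_⟩
  have hr : 0 < r := hρ.trans_le hρr
  have hLr : 0 < -log r := by linarith [log_neg hr (hrA.trans_lt hA1)]
  have hLAr : -log A ≤ -log r := by linarith [log_le_log hr hrA]
  set x := (r / ρ) ^ s⁻¹ with hx
  have hx1 : 1 ≤ x := one_le_rpow ((one_le_div hρ).2 hρr) (inv_nonneg.2 hs.le)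
  -- `log y ≤ s y^(1/s)` trades the logarithmic growth of `-log ρ` for a power of `r / ρ`
  have hlog : log (r / ρ) ≤ s * x := by
    simpa [div_inv_eq_mul, mul_comm] using log_le_rpow_div (div_pos hr hρ).le (inv_pos.2 hs)
  have hsx : s * x ≤ s / -log A * x * -log r := by
    rw [div_mul_eq_mul_div, div_mul_eq_mul_div, le_div_iff₀ hLA]
    gcongr
  have key : -log ρ ≤ (1 + s / -log A) * x * -log r := by
    rw [log_div hr.ne' hρ.ne'] at hlog
    nlinarith
  calc (-log ρ) ^ s ≤ ((1 + s / -log A) * x * -log r) ^ s :=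
        rpow_le_rpow (by linarith [log_neg hρ (hρr.trans_lt (hrA.trans_lt hA1))]) key hs.le
    _ = (1 + s / -log A) ^ s * (r / ρ) * (-log r) ^ s := by
        rw [mul_rpow (by positivity) hLr.le, mul_rpow (by positivity) (by positivity), hx,
          rpow_inv_rpow (div_pos hr hρ).le hs.ne']

theorem exists_lintegral_rpow_mul_neg_log_rpow_le (s : ℝ) {A : ℝ} (hA0 : 0 < A) (hA1 : A < 1) :
    ∃ K > 0, ∀ a : ℝ, 1 ≤ a → ∀ r ∈ Ioo 0 A,
      ∫⁻ ρ in Ioo 0 r, ENNReal.ofReal (ρ ^ a * (-log ρ) ^ s)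
        ≤ ENNReal.ofReal (K * r ^ (a + 1) * (-log r) ^ s) := by
  obtain ⟨K, hK, hbound⟩ := exists_neg_log_rpow_le_mul_div s hA0 hA1
  refine ⟨K, hK, fun a ha r hr => ?_⟩
  have hLr : 0 < -log r := by linarith [log_neg hr.1 (hr.2.trans hA1)]
  have hpt : ∀ ρ ∈ Ioo 0 r, ρ ^ a * (-log ρ) ^ s ≤ K * r ^ a * (-log r) ^ s := fun ρ hρ => by
    calc ρ ^ a * (-log ρ) ^ s ≤ ρ ^ a * (K * (r / ρ) * (-log r) ^ s) :=
          mul_le_mul_of_nonneg_left (hbound hρ.1 hρ.2.le hr.2.le) (by positivity [hρ.1])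
      _ = K * (ρ ^ (a - 1) * r) * (-log r) ^ s := by
          rw [rpow_sub_one hρ.1.ne']; ring
      _ ≤ K * (r ^ (a - 1) * r) * (-log r) ^ s := by
          have : ρ ^ (a - 1) ≤ r ^ (a - 1) := rpow_le_rpow hρ.1.le hρ.2.le (by linarith)
          gcongr
          exact hr.1.le
      _ = K * r ^ a * (-log r) ^ s := by
          rw [rpow_sub_one hr.1.ne', div_mul_cancel₀ _ hr.1.ne']
  calc ∫⁻ ρ in Ioo 0 r, ENNReal.ofReal (ρ ^ a * (-log ρ) ^ s)
      ≤ ∫⁻ _ in Ioo 0 r, ENNReal.ofReal (K * r ^ a * (-log r) ^ s) :=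
        setLIntegral_mono' measurableSet_Ioo fun ρ hρ => ENNReal.ofReal_le_ofReal (hpt ρ hρ)
    _ = ENNReal.ofReal (K * r ^ (a + 1) * (-log r) ^ s) := by
        rw [setLIntegral_const, volume_Ioo, sub_zero, ← ENNReal.ofReal_mul (by positivity [hr.1]),
          rpow_add_one hr.1.ne']
        ring_nf

theorem lintegral_inv_div_log_sq_Ioo {A : ℝ} (hA0 : 0 < A) (hA1 : A < 1) :
    ∫⁻ r in Ioo 0 A, ENNReal.ofReal (r⁻¹ / log r ^ 2) = ENNReal.ofReal (-(log A)⁻¹) := by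
  have hderiv : ∀ x ∈ Ioo 0 A, HasDerivAt (fun x => -(log x)⁻¹) (x⁻¹ / log x ^ 2) x := by
    intro x hx
    simpa [neg_div] using
      (hasDerivAt_inv_log hx.1.ne' (hx.2.trans hA1).ne (by linarith [hx.1])).fun_neg
  -- since `log 0 = 0`, the antiderivative `-(log x)⁻¹` is continuous at `0` too
  have hcont : ContinuousOn (fun x => -(log x)⁻¹) (Icc 0 A) := by
    intro x hx
    rcases hx.1.eq_or_lt with rfl | hx0
    · refine (ContinuousAt.neg ?_).continuousWithinAt
      rw [← continuousWithinAt_compl_self, ContinuousWithinAt, log_zero, inv_zero]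
      exact tendsto_log_nhdsNE_zero.inv_tendsto_atBot
    · exact ((continuousAt_log hx0.ne').inv₀ (log_neg hx0 (hx.2.trans_lt hA1)).ne).neg
        |>.continuousWithinAt
  have hnonneg : ∀ x : ℝ, 0 < x → 0 ≤ x⁻¹ / log x ^ 2 := fun x hx => by positivity
  have hint := intervalIntegral.integrableOn_deriv_of_nonneg hcont hderiv fun x hx => hnonneg x hx.1
  rw [setLIntegral_congr Ioo_ae_eq_Ioc, ← ofReal_integral_eq_lintegral_ofReal hint
    ((ae_restrict_iff' measurableSet_Ioc).2 (ae_of_all _ fun x hx => hnonneg x hx.1)),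
    ← intervalIntegral.integral_of_le hA0.le,
    intervalIntegral.integral_eq_sub_of_hasDerivAt_of_le hA0.le hcont hderiv
      ((intervalIntegrable_iff_integrableOn_Ioc_of_le hA0.le).2 hint)]
  simp

end Real

theorem sq_lintegral_rpow_mul_le (n l : ℝ) {r : ℝ} (hr : r ≤ 1) {g : ℝ → ℝ≥0∞}
    (hg : Measurable g) :
    (∫⁻ ρ in Ioo 0 r, ENNReal.ofReal (ρ ^ (-n)) * g ρ) ^ 2
      ≤ (∫⁻ ρ in Ioo 0 r, ENNReal.ofReal (ρ ^ (-2 * n - 1) * (-log ρ) ^ (-l))) *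
        ∫⁻ ρ in Ioo 0 r, ENNReal.ofReal (ρ * (-log ρ) ^ l) * g ρ ^ 2 := by
  have hweight : ∀ ρ ∈ Ioo 0 r,
      ENNReal.ofReal (ρ ^ (-n)) ^ 2
        ≤ ENNReal.ofReal (ρ ^ (-2 * n - 1) * (-log ρ) ^ (-l)) *
          ENNReal.ofReal (ρ * (-log ρ) ^ l) := by
    intro ρ hρ
    have hL : 0 < -log ρ := by linarith [log_neg hρ.1 (hρ.2.trans_le hr)]
    rw [← ENNReal.ofReal_pow (by positivity [hρ.1]), ← ENNReal.ofReal_mul (by positivity [hρ.1])]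
    refine le_of_eq (congrArg _ ?_)
    calc (ρ ^ (-n)) ^ 2 = ρ ^ (-2 * n - 1) * ρ * ((-log ρ) ^ (-l) * (-log ρ) ^ l) := by
          rw [rpow_neg hL.le, inv_mul_cancel₀ (by positivity), mul_one,
            ← rpow_add_one hρ.1.ne', sub_add_cancel, ← rpow_natCast, ← rpow_mul hρ.1.le]
          ring_nf
      _ = ρ ^ (-2 * n - 1) * (-log ρ) ^ (-l) * (ρ * (-log ρ) ^ l) := by ring
  refine ENNReal.lintegral_mul_sq_le_of_sq_le_mul ?_ ?_ hg.aemeasurable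
    ((ae_restrict_iff' measurableSet_Ioo).2 (ae_of_all _ hweight))
  all_goals exact Measurable.aemeasurable (by fun_prop)

theorem exists_hardy_rpow_neg_log (l : ℝ) {A : ℝ} (hA0 : 0 < A) (hA1 : A < 1) :
    ∃ C > 0, ∀ n : ℝ, n ≤ -1 → ∀ g : ℝ → ℝ≥0∞, Measurable g →
      ∫⁻ r in Ioo 0 A, ENNReal.ofReal (r ^ (2 * n - 1) * (-log r) ^ (l - 2)) *
          (∫⁻ ρ in Ioo 0 r, ENNReal.ofReal (ρ ^ (-n)) * g ρ) ^ 2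
        ≤ ENNReal.ofReal C * ∫⁻ r in Ioo 0 A, ENNReal.ofReal (r * (-log r) ^ l) * g r ^ 2 := by
  obtain ⟨K, hK, hW⟩ := exists_lintegral_rpow_mul_neg_log_rpow_le (-l) hA0 hA1
  have hLA : 0 < -(log A)⁻¹ := neg_pos.2 (inv_lt_zero.2 (log_neg hA0 hA1))
  refine ⟨K * -(log A)⁻¹, mul_pos hK hLA, fun n hn g hg => ?_⟩
  set I := ∫⁻ r in Ioo 0 A, ENNReal.ofReal (r * (-log r) ^ l) * g r ^ 2
  have hpt : ∀ r ∈ Ioo 0 A, ENNReal.ofReal (r ^ (2 * n - 1) * (-log r) ^ (l - 2)) *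
      (∫⁻ ρ in Ioo 0 r, ENNReal.ofReal (ρ ^ (-n)) * g ρ) ^ 2
        ≤ ENNReal.ofReal (K * (r⁻¹ / log r ^ 2)) * I := by
    intro r hr
    have hL : 0 < -log r := by linarith [log_neg hr.1 (hr.2.trans hA1)]
    have hCS := sq_lintegral_rpow_mul_le n l (hr.2.trans hA1).le hg
    have hrest : ∫⁻ ρ in Ioo 0 r, ENNReal.ofReal (ρ * (-log ρ) ^ l) * g ρ ^ 2 ≤ I :=
      lintegral_mono_set (Ioo_subset_Ioo_right hr.2.le)
    have hcombine : r ^ (2 * n - 1) * (-log r) ^ (l - 2) *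
        (K * r ^ (-2 * n - 1 + 1) * (-log r) ^ (-l)) = K * (r⁻¹ / log r ^ 2) := by
      have hr' : r ^ (2 * n - 1) * r ^ (-2 * n - 1 + 1) = r⁻¹ := by
        rw [← rpow_add hr.1, ← rpow_neg_one]; ring_nf
      have hL' : (-log r) ^ (l - 2) * (-log r) ^ (-l) = (log r ^ 2)⁻¹ := by
        rw [← rpow_add hL, ← neg_sq, ← rpow_two, ← rpow_neg hL.le]; ring_nf
      rw [div_eq_mul_inv, ← hr', ← hL']
      ring
    calc ENNReal.ofReal (r ^ (2 * n - 1) * (-log r) ^ (l - 2)) *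
          (∫⁻ ρ in Ioo 0 r, ENNReal.ofReal (ρ ^ (-n)) * g ρ) ^ 2
        ≤ ENNReal.ofReal (r ^ (2 * n - 1) * (-log r) ^ (l - 2)) *
          (ENNReal.ofReal (K * r ^ (-2 * n - 1 + 1) * (-log r) ^ (-l)) * I) := by
          gcongr
          exact hCS.trans (mul_le_mul' (hW _ (by linarith) r hr) hrest)
      _ = ENNReal.ofReal (K * (r⁻¹ / log r ^ 2)) * I := by
          rw [← mul_assoc, ← ENNReal.ofReal_mul (by positivity [hr.1]), hcombine]
  calc ∫⁻ r in Ioo 0 A, ENNReal.ofReal (r ^ (2 * n - 1) * (-log r) ^ (l - 2)) *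
        (∫⁻ ρ in Ioo 0 r, ENNReal.ofReal (ρ ^ (-n)) * g ρ) ^ 2
      ≤ ∫⁻ r in Ioo 0 A, ENNReal.ofReal (K * (r⁻¹ / log r ^ 2)) * I :=
        setLIntegral_mono' measurableSet_Ioo hpt
    _ = ENNReal.ofReal (K * -(log A)⁻¹) * I := by
        simp_rw [ENNReal.ofReal_mul hK.le]
        rw [lintegral_mul_const _ (by fun_prop), lintegral_const_mul _ (by fun_prop),
          lintegral_inv_div_log_sq_Ioo hA0 hA1]

theorem exists_hardy_rpow_neg_log_fiber (k l : ℝ) {A : ℝ} (hA0 : 0 < A) (hA1 : A < 1) :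
    ∃ C > 0, ∀ n : ℝ, n ≤ -1 → ∀ h : ℝ → ℂ, Measurable h → ∀ r₁ ∈ Ioo 0 A,
      ∫⁻ r in Ioo 0 A,
          ENNReal.ofReal (r₁ * r ^ (2 * n - 1) * (-log r₁) ^ k * (-log r) ^ (l - 2)) *
            (∫⁻ ρ in Ioo 0 r, ENNReal.ofReal (ρ ^ (-n) * ‖h ρ‖)) ^ 2
        ≤ ENNReal.ofReal C * ∫⁻ r in Ioo 0 A,
            ENNReal.ofReal (‖h r‖ ^ 2 * r₁ * r * (-log r₁) ^ k * (-log r) ^ l) := by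
  obtain ⟨C, hC, hardy⟩ := exists_hardy_rpow_neg_log l hA0 hA1
  refine ⟨C, hC, fun n hn h hh r₁ hr₁ => ?_⟩
  have hw : 0 ≤ r₁ * (-log r₁) ^ k := by
    have : 0 < -log r₁ := by linarith [log_neg hr₁.1 (hr₁.2.trans hA1)]
    positivity [hr₁.1]
  have hlhs : ∀ r ∈ Ioo 0 A,
      ENNReal.ofReal (r₁ * r ^ (2 * n - 1) * (-log r₁) ^ k * (-log r) ^ (l - 2)) *
        (∫⁻ ρ in Ioo 0 r, ENNReal.ofReal (ρ ^ (-n) * ‖h ρ‖)) ^ 2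
      = ENNReal.ofReal (r₁ * (-log r₁) ^ k) *
        (ENNReal.ofReal (r ^ (2 * n - 1) * (-log r) ^ (l - 2)) *
          (∫⁻ ρ in Ioo 0 r, ENNReal.ofReal (ρ ^ (-n)) * ‖h ρ‖ₑ) ^ 2) := by
    intro r hr
    rw [← mul_assoc, ← ENNReal.ofReal_mul hw]
    congr 2
    · ring
    · refine setLIntegral_congr_fun measurableSet_Ioo fun ρ hρ => ?_
      rw [ENNReal.ofReal_mul (by positivity [hρ.1]), ofReal_norm]
  have hrhs : ∀ r ∈ Ioo 0 A,
      ENNReal.ofReal (r₁ * (-log r₁) ^ k) * (ENNReal.ofReal (r * (-log r) ^ l) * ‖h r‖ₑ ^ 2)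
      = ENNReal.ofReal (‖h r‖ ^ 2 * r₁ * r * (-log r₁) ^ k * (-log r) ^ l) := by
    intro r hr
    have : 0 < -log r := by linarith [log_neg hr.1 (hr.2.trans hA1)]
    rw [← ofReal_norm, ← ENNReal.ofReal_pow (norm_nonneg _),
      ← ENNReal.ofReal_mul (by positivity [hr.1]), ← ENNReal.ofReal_mul hw]
    ring_nf
  rw [setLIntegral_congr_fun measurableSet_Ioo hlhs, lintegral_const_mul' _ _ ENNReal.ofReal_ne_top,
    ← setLIntegral_congr_fun measurableSet_Ioo hrhs, lintegral_const_mul' _ _ ENNReal.ofReal_ne_top,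
    mul_left_comm]
  gcongr
  exact hardy n hn _ hh.enorm

/-- Two-variable weighted Hardy-type inequality: for all reals `k, l` and `A ∈ (0,1)`
there is `C > 0` (depending only on `k, l, A`) such that for every real `n ≤ -1` and
measurable `f : (0,A) × (0,A) → ℂ`,
`∫₀^A ∫₀^A r₁ r₂^(2n-1) (-log r₁)^k (-log r₂)^(l-2) (∫₀^{r₂} ρ^(-n) |f(r₁,ρ)| dρ)² dr₂ dr₁
  ≤ C ∫₀^A ∫₀^A |f(r₁,r₂)|² r₁ r₂ (-log r₁)^k (-log r₂)^l dr₂ dr₁` in `[0,∞]`. -/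
theorem hardy_weighted_two_variables (k l : ℝ) (A : ℝ) (hA0 : 0 < A) (hA1 : A < 1) :
    ∃ C : ℝ, 0 < C ∧ ∀ n : ℝ, n ≤ -1 →
      ∀ f : ℝ → ℝ → ℂ, Measurable (Function.uncurry f) →
      ∫⁻ r1 in Set.Ioo (0 : ℝ) A, ∫⁻ r2 in Set.Ioo (0 : ℝ) A,
          ENNReal.ofReal
              (r1 * r2 ^ (2 * n - 1) * (-Real.log r1) ^ k * (-Real.log r2) ^ (l - 2)) *
            (∫⁻ ρ in Set.Ioo (0 : ℝ) r2,
              ENNReal.ofReal (ρ ^ (-n) * ‖f r1 ρ‖)) ^ 2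
        ≤ ENNReal.ofReal C *
          ∫⁻ r1 in Set.Ioo (0 : ℝ) A, ∫⁻ r2 in Set.Ioo (0 : ℝ) A,
            ENNReal.ofReal (‖f r1 r2‖ ^ 2 * r1 * r2 *
              (-Real.log r1) ^ k * (-Real.log r2) ^ l) := by
  obtain ⟨C, hC, hfiber⟩ := exists_hardy_rpow_neg_log_fiber k l hA0 hA1
  refine ⟨C, hC, fun n hn f hf => ?_⟩
  calc _ ≤ ∫⁻ r1 in Ioo 0 A, ENNReal.ofReal C * ∫⁻ r2 in Ioo 0 A,
          ENNReal.ofReal (‖f r1 r2‖ ^ 2 * r1 * r2 * (-Real.log r1) ^ k * (-Real.log r2) ^ l) :=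
        setLIntegral_mono' measurableSet_Ioo fun r1 hr1 =>
          hfiber n hn (f r1) (hf.comp measurable_prodMk_left) r1 hr1
    _ = _ := lintegral_const_mul' _ _ ENNReal.ofReal_ne_top
end
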